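/- arXiv:math/0110175 — 8 statements merged into one kernel-verified Lean document; each statement's English description precedes it below -/
import Mathlib

section
/- Let h ≥ 1 be an integer, c > 0 a real number, and s a complex number with Re(s) > h. Then z_{2h}(s,c) = (1/(2h−1)!) · Σ_{l=0}^{h−1} b_{2h,l} · z_even(s−l, 0, 2h−1, c), where both sides are given by absolutely convergent series. -/
/-!
Write `m = 2h - 1` and `x = cn`. By the defining identity of the `b_{2h,l}`,
`∏_{i=1}^{2h-2} (x + i) = ∑_l b_{2h,l} (x (x + m))^l`, and each factor `(x (x + m))^l` lowers
the exponent `s` of the denominator `(x (x + m))^s` by `l`. So the general term of `z_{2h}(s,c)`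
is a finite combination of general terms of the series `z_even(s - l, 0, m, c)`, each of which
converges absolutely because `s - l` has real part `> 1`.
-/

open Polynomial

noncomputable section

/-- `z_even(w, 0, m, c) = ∑_{n ≥ 1} evenTerm m w (c n)`. -/
def evenTerm (m : ℝ) (w : ℂ) (x : ℝ) : ℂ :=
  ((2 * x + m : ℝ) : ℂ) / ((x * (x + m) : ℝ) : ℂ) ^ w

lemma norm_evenTerm_le {c m x : ℝ} {w : ℂ} (hc : 0 < c) (hm : 0 ≤ m) (hcx : c ≤ x)
    (hw : 0 < w.re) :
    ‖evenTerm m w x‖ ≤ (2 + m / c) * x ^ (1 - 2 * w.re) := by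
  have hx : 0 < x := hc.trans_le hcx
  have hnum : 2 * x + m ≤ (2 + m / c) * x := by
    have : m ≤ m / c * x := by
      rw [div_mul_eq_mul_div, le_div_iff₀ hc]
      exact mul_le_mul_of_nonneg_left hcx hm
    linarith
  have hden : (x ^ (2 : ℝ)) ^ w.re ≤ (x * (x + m)) ^ w.re :=
    Real.rpow_le_rpow (by positivity) (by rw [Real.rpow_two]; nlinarith) hw.le
  rw [evenTerm, norm_div, Complex.norm_real, Real.norm_of_nonneg (by positivity),
    Complex.norm_cpow_eq_rpow_re_of_pos (by positivity)]
  calc (2 * x + m) / (x * (x + m)) ^ w.re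
      ≤ (2 + m / c) * x / (x ^ (2 : ℝ)) ^ w.re :=
        div_le_div₀ (by positivity) hnum (by positivity) hden
    _ = (2 + m / c) * x ^ (1 - 2 * w.re) := by
        rw [← Real.rpow_mul hx.le, Real.rpow_sub hx, Real.rpow_one, mul_div_assoc]

lemma summable_evenTerm {c m : ℝ} {w : ℂ} (hc : 0 < c) (hm : 0 ≤ m) (hw : 1 < w.re) :
    Summable fun n : ℕ => evenTerm m w (c * (n + 1)) := by
  have hshift : Summable fun n : ℕ => ((n + 1 : ℕ) : ℝ) ^ (1 - 2 * w.re) :=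
    (summable_nat_add_iff 1).2 (Real.summable_nat_rpow.2 (by linarith))
  have hbound : Summable fun n : ℕ => (2 + m / c) * (c * (n + 1)) ^ (1 - 2 * w.re) := by
    refine (hshift.mul_left ((2 + m / c) * c ^ (1 - 2 * w.re))).congr fun n => ?_
    rw [Real.mul_rpow hc.le (by positivity)]
    push_cast
    ring
  refine Summable.of_norm_bounded hbound fun n => norm_evenTerm_le hc hm ?_ (by linarith)
  nlinarith [n.cast_nonneg (α := ℝ)]

lemma evenTerm_mul_pow {m x : ℝ} (hx : x * (x + m) ≠ 0) (w : ℂ) (l : ℕ) :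
    evenTerm m w x * ((x * (x + m) : ℝ) : ℂ) ^ l = evenTerm m (w - l) x := by
  have hx' : ((x * (x + m) : ℝ) : ℂ) ≠ 0 := by exact_mod_cast hx
  rw [evenTerm, evenTerm, Complex.cpow_sub _ _ hx', Complex.cpow_natCast, div_div_eq_mul_div,
    mul_div_right_comm]

lemma div_cpow_eq_sum_evenTerm {ι : Type*} (S : Finset ι) (b : ι → ℝ) (e : ι → ℕ)
    {m x : ℝ} (hx : x * (x + m) ≠ 0) (K : ℝ) (w : ℂ) :
    ((((2 * x + m) / K * ∑ l ∈ S, b l * (x * (x + m)) ^ e l : ℝ)) : ℂ) /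
        ((x * (x + m) : ℝ) : ℂ) ^ w =
      ∑ l ∈ S, (K : ℂ)⁻¹ * b l * evenTerm m (w - e l) x := by
  push_cast
  rw [Finset.mul_sum, Finset.sum_div]
  refine Finset.sum_congr rfl fun l _ => ?_
  rw [← evenTerm_mul_pow hx, evenTerm]
  push_cast
  ring

end

theorem z_even_dim_decomposition_general (h : ℕ) (c : ℝ) (hc : 0 < c)
    (b : ℕ → ℝ)
    (hb : (∏ i ∈ Finset.Icc 1 (2 * h - 2), (X + C (i : ℝ))) =
      ∑ l ∈ Finset.range h, C (b l) * (X ^ 2 + C ((2 * h - 1 : ℕ) : ℝ) * X) ^ l)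
    (s : ℂ) (hs : (h : ℝ) < s.re) :
    Summable (fun n : ℕ =>
        (((2 * (c * (n + 1)) + ((2 * h - 1 : ℕ) : ℝ)) / (Nat.factorial (2 * h - 1) : ℝ) *
            ∏ i ∈ Finset.Icc 1 (2 * h - 2), (c * (n + 1) + (i : ℝ)) : ℝ) : ℂ) /
          ((c * (n + 1) * (c * (n + 1) + ((2 * h - 1 : ℕ) : ℝ)) : ℝ) : ℂ) ^ s) ∧
      (∀ l < h, Summable (fun n : ℕ =>
        ((2 * (c * (n + 1)) + ((2 * h - 1 : ℕ) : ℝ) : ℝ) : ℂ) /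
          ((c * (n + 1) * (c * (n + 1) + ((2 * h - 1 : ℕ) : ℝ)) : ℝ) : ℂ) ^ (s - l))) ∧
      (∑' n : ℕ,
        (((2 * (c * (n + 1)) + ((2 * h - 1 : ℕ) : ℝ)) / (Nat.factorial (2 * h - 1) : ℝ) *
            ∏ i ∈ Finset.Icc 1 (2 * h - 2), (c * (n + 1) + (i : ℝ)) : ℝ) : ℂ) /
          ((c * (n + 1) * (c * (n + 1) + ((2 * h - 1 : ℕ) : ℝ)) : ℝ) : ℂ) ^ s) =
        (1 / (Nat.factorial (2 * h - 1) : ℂ)) *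
          ∑ l ∈ Finset.range h, (b l : ℂ) *
            ∑' n : ℕ,
              ((2 * (c * (n + 1)) + ((2 * h - 1 : ℕ) : ℝ) : ℝ) : ℂ) /
                ((c * (n + 1) * (c * (n + 1) + ((2 * h - 1 : ℕ) : ℝ)) : ℝ) : ℂ) ^ (s - l) := by
  set m : ℝ := ((2 * h - 1 : ℕ) : ℝ)
  have hsum : ∀ l < h, Summable fun n : ℕ => evenTerm m (s - l) (c * (n + 1)) := fun l hl =>
    summable_evenTerm hc (by positivity) (by
      have : (l : ℝ) + 1 ≤ h := by exact_mod_cast hl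
      simp only [Complex.sub_re, Complex.natCast_re]
      linarith)
  have hprod (x : ℝ) : ∏ i ∈ Finset.Icc 1 (2 * h - 2), (x + (i : ℝ)) =
      ∑ l ∈ Finset.range h, b l * (x * (x + m)) ^ l := by
    simpa [eval_prod, eval_finsetSum, sq, mul_add, mul_comm x m] using congrArg (eval x) hb
  have hterm (n : ℕ) := div_cpow_eq_sum_evenTerm (Finset.range h) b id
    (m := m) (x := c * (n + 1)) (by positivity) (Nat.factorial (2 * h - 1)) s
  simp only [← hprod, id] at hterm
  have hsumL := summable_sum fun l hl => (hsum l (Finset.mem_range.1 hl)).mul_left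
    ((Nat.factorial (2 * h - 1) : ℂ)⁻¹ * b l)
  refine ⟨hsumL.congr fun n => (hterm n).symm, hsum, ?_⟩
  rw [funext hterm, Summable.tsum_finsetSum fun l hl => (hsum l (Finset.mem_range.1 hl)).mul_left _,
    Finset.mul_sum]
  refine Finset.sum_congr rfl fun l _ => ?_
  rw [tsum_mul_left, one_div, mul_assoc]
  rfl

/-- Lemma 3, even case: `z_{2h}(s,c)` as a combination of `z_even(s-l,0,2h-1,c)`. -/
theorem z_even_dim_decomposition (h : ℕ) (hh : 1 ≤ h) (c : ℝ) (hc : 0 < c)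
    (b : ℕ → ℝ)
    (hb : (∏ i ∈ Finset.Icc 1 (2 * h - 2), (X + C (i : ℝ))) =
      ∑ l ∈ Finset.range h, C (b l) * (X ^ 2 + C ((2 * h - 1 : ℕ) : ℝ) * X) ^ l)
    (s : ℂ) (hs : (h : ℝ) < s.re) :
    Summable (fun n : ℕ =>
        (((2 * (c * (n + 1)) + ((2 * h - 1 : ℕ) : ℝ)) / (Nat.factorial (2 * h - 1) : ℝ) *
            ∏ i ∈ Finset.Icc 1 (2 * h - 2), (c * (n + 1) + (i : ℝ)) : ℝ) : ℂ) /
          ((c * (n + 1) * (c * (n + 1) + ((2 * h - 1 : ℕ) : ℝ)) : ℝ) : ℂ) ^ s) ∧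
      (∀ l < h, Summable (fun n : ℕ =>
        ((2 * (c * (n + 1)) + ((2 * h - 1 : ℕ) : ℝ) : ℝ) : ℂ) /
          ((c * (n + 1) * (c * (n + 1) + ((2 * h - 1 : ℕ) : ℝ)) : ℝ) : ℂ) ^ (s - l))) ∧
      (∑' n : ℕ,
        (((2 * (c * (n + 1)) + ((2 * h - 1 : ℕ) : ℝ)) / (Nat.factorial (2 * h - 1) : ℝ) *
            ∏ i ∈ Finset.Icc 1 (2 * h - 2), (c * (n + 1) + (i : ℝ)) : ℝ) : ℂ) /
          ((c * (n + 1) * (c * (n + 1) + ((2 * h - 1 : ℕ) : ℝ)) : ℝ) : ℂ) ^ s) =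
        (1 / (Nat.factorial (2 * h - 1) : ℂ)) *
          ∑ l ∈ Finset.range h, (b l : ℂ) *
            ∑' n : ℕ,
              ((2 * (c * (n + 1)) + ((2 * h - 1 : ℕ) : ℝ) : ℝ) : ℂ) /
                ((c * (n + 1) * (c * (n + 1) + ((2 * h - 1 : ℕ) : ℝ)) : ℝ) : ℂ) ^ (s - l) :=
  z_even_dim_decomposition_general h c hc b hb s hs
end

section
/- Let h ≥ 1 be an integer, c > 0 a real number, and s a complex number with Re(s) > h + 1/2. Then z_{2h+1}(s,c) = (2/(2h)!) · Σ_{l=0}^{h} b_{2h+1,l} · z_odd(s−l, 0, 2h, c), where both sides are given by absolutely convergent series. -/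
open Polynomial

/-!
With `x = c n` and `t = x (x + 2h)`, the identity defining `b_{2h+1,l}` turns the numerator
`Q_{2h+1}(x) = 2 (x + h) ∏ (x + i) / (2h)!` into `2 / (2h)! · Σ_l b_{2h+1,l} t^l`, so each term of
`z_{2h+1}(s, c)` is a fixed finite combination of the terms `t^{l-s}` of `z_odd(s - l, 0, 2h, c)`.
These are absolutely summable because `t ≥ x²` and `Re (s - l) > 1/2`.
-/

lemma summable_one_div_ofReal_mul_add_cpow {c d : ℝ} (hc : 0 < c) (hd : 0 ≤ d) {w : ℂ}
    (hw : 1 / 2 < w.re) :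
    Summable fun n : ℕ => 1 / ((c * (n + 1) * (c * (n + 1) + d) : ℝ) : ℂ) ^ w := by
  have hp : Summable fun n : ℕ => c ^ (-(2 * w.re)) * ((n + 1 : ℕ) : ℝ) ^ (-(2 * w.re)) :=
    ((summable_nat_add_iff 1).mpr (Real.summable_nat_rpow.mpr (by linarith))).mul_left _
  refine .of_norm_bounded hp fun n => ?_
  have hx : 0 < c * (n + 1) := by positivity
  have ht : 0 < c * (n + 1) * (c * (n + 1) + d) := by positivity
  rw [norm_div, norm_one, Complex.norm_cpow_eq_rpow_re_of_pos ht, one_div, ← Real.rpow_neg ht.le,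
    ← Real.mul_rpow hc.le (by positivity), Nat.cast_add_one, neg_mul_eq_mul_neg,
    Real.rpow_mul hx.le]
  refine Real.rpow_le_rpow_of_nonpos (by positivity) ?_ (by linarith)
  rw [Real.rpow_two]
  nlinarith

lemma sum_mul_pow_div_cpow {t : ℂ} (ht : t ≠ 0) (s : Finset ℕ) (b : ℕ → ℂ) (w : ℂ) :
    (∑ l ∈ s, b l * t ^ l) / t ^ w = ∑ l ∈ s, b l * (1 / t ^ (w - l)) := by
  rw [Finset.sum_div]
  refine Finset.sum_congr rfl fun l _ => ?_
  rw [Complex.cpow_sub _ _ ht, Complex.cpow_natCast, one_div_div, mul_div_assoc]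

lemma qOdd_div_cpow_eq_sum {h : ℕ} {b : ℕ → ℝ}
    (hb : (X + C (h : ℝ)) * ∏ i ∈ Finset.Icc 1 (2 * h - 1), (X + C (i : ℝ)) =
      ∑ l ∈ Finset.range (h + 1), C (b l) * (X ^ 2 + C ((2 * h : ℕ) : ℝ) * X) ^ l)
    {x : ℝ} (hx : 0 < x) (s : ℂ) :
    (((2 * x + (2 * h : ℝ)) / (Nat.factorial (2 * h) : ℝ) *
        ∏ i ∈ Finset.Icc 1 (2 * h - 1), (x + (i : ℝ)) : ℝ) : ℂ) /
        ((x * (x + (2 * h : ℝ)) : ℝ) : ℂ) ^ s =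
      2 / (Nat.factorial (2 * h) : ℂ) * ∑ l ∈ Finset.range (h + 1),
        (b l : ℂ) * (1 / ((x * (x + (2 * h : ℝ)) : ℝ) : ℂ) ^ (s - l)) := by
  have heval : (x + h) * ∏ i ∈ Finset.Icc 1 (2 * h - 1), (x + (i : ℝ)) =
      ∑ l ∈ Finset.range (h + 1), b l * (x * (x + 2 * h)) ^ l := by
    convert congrArg (eval x) hb using 1
    · simp [eval_prod]
    · simp only [eval_finsetSum, eval_mul, eval_C, eval_pow, eval_add, eval_X]
      push_cast
      ring_nf
  have hnum : (2 * x + (2 * h : ℝ)) / (Nat.factorial (2 * h) : ℝ) *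
      ∏ i ∈ Finset.Icc 1 (2 * h - 1), (x + (i : ℝ)) =
      2 / (Nat.factorial (2 * h) : ℝ) * ∑ l ∈ Finset.range (h + 1), b l * (x * (x + 2 * h)) ^ l := by
    rw [← heval]
    ring
  have ht : ((x * (x + (2 * h : ℝ)) : ℝ) : ℂ) ≠ 0 := by
    exact_mod_cast (by positivity : 0 < x * (x + 2 * h)).ne'
  rw [hnum]
  generalize x * (x + 2 * h) = t at ht ⊢
  push_cast
  rw [mul_div_assoc, sum_mul_pow_div_cpow ht]

theorem z_odd_dim_decomposition_general (h : ℕ) (c : ℝ) (hc : 0 < c)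
    (b : ℕ → ℝ)
    (hb : (X + C (h : ℝ)) * ∏ i ∈ Finset.Icc 1 (2 * h - 1), (X + C (i : ℝ)) =
      ∑ l ∈ Finset.range (h + 1), C (b l) * (X ^ 2 + C ((2 * h : ℕ) : ℝ) * X) ^ l)
    (s : ℂ) (hs : (h : ℝ) + 1 / 2 < s.re) :
    Summable (fun n : ℕ =>
        (((2 * (c * (n + 1)) + (2 * h : ℝ)) / (Nat.factorial (2 * h) : ℝ) *
            ∏ i ∈ Finset.Icc 1 (2 * h - 1), (c * (n + 1) + (i : ℝ)) : ℝ) : ℂ) /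
          ((c * (n + 1) * (c * (n + 1) + (2 * h : ℝ)) : ℝ) : ℂ) ^ s) ∧
      (∀ l ≤ h, Summable (fun n : ℕ =>
        1 / ((c * (n + 1) * (c * (n + 1) + (2 * h : ℝ)) : ℝ) : ℂ) ^ (s - l))) ∧
      (∑' n : ℕ,
        (((2 * (c * (n + 1)) + (2 * h : ℝ)) / (Nat.factorial (2 * h) : ℝ) *
            ∏ i ∈ Finset.Icc 1 (2 * h - 1), (c * (n + 1) + (i : ℝ)) : ℝ) : ℂ) /
          ((c * (n + 1) * (c * (n + 1) + (2 * h : ℝ)) : ℝ) : ℂ) ^ s) =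
        (2 / (Nat.factorial (2 * h) : ℂ)) *
          ∑ l ∈ Finset.range (h + 1), (b l : ℂ) *
            ∑' n : ℕ,
              1 / ((c * (n + 1) * (c * (n + 1) + (2 * h : ℝ)) : ℝ) : ℂ) ^ (s - l) := by
  have hzodd : ∀ l ≤ h, Summable fun n : ℕ =>
      1 / ((c * (n + 1) * (c * (n + 1) + (2 * h : ℝ)) : ℝ) : ℂ) ^ (s - l) := by
    intro l hl
    refine summable_one_div_ofReal_mul_add_cpow hc (by positivity) ?_
    have : (l : ℝ) ≤ h := by exact_mod_cast hl
    rw [Complex.sub_re, Complex.natCast_re]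
    linarith
  have hsum := (hasSum_sum fun l hl =>
    ((hzodd l (Nat.lt_succ_iff.mp (Finset.mem_range.mp hl))).hasSum.mul_left (b l : ℂ))).mul_left
      (2 / (Nat.factorial (2 * h) : ℂ))
  rw [← funext fun n : ℕ => qOdd_div_cpow_eq_sum hb (by positivity : 0 < c * (n + 1)) s] at hsum
  exact ⟨hsum.summable, hzodd, hsum.tsum_eq⟩

/-- Lemma 3, odd case: `z_{2h+1}(s,c)` as a combination of `z_odd(s-l,0,2h,c)`. -/
theorem z_odd_dim_decomposition (h : ℕ) (hh : 1 ≤ h) (c : ℝ) (hc : 0 < c)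
    (b : ℕ → ℝ)
    (hb : (X + C (h : ℝ)) * ∏ i ∈ Finset.Icc 1 (2 * h - 1), (X + C (i : ℝ)) =
      ∑ l ∈ Finset.range (h + 1), C (b l) * (X ^ 2 + C ((2 * h : ℕ) : ℝ) * X) ^ l)
    (s : ℂ) (hs : (h : ℝ) + 1 / 2 < s.re) :
    Summable (fun n : ℕ =>
        (((2 * (c * (n + 1)) + (2 * h : ℝ)) / (Nat.factorial (2 * h) : ℝ) *
            ∏ i ∈ Finset.Icc 1 (2 * h - 1), (c * (n + 1) + (i : ℝ)) : ℝ) : ℂ) /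
          ((c * (n + 1) * (c * (n + 1) + (2 * h : ℝ)) : ℝ) : ℂ) ^ s) ∧
      (∀ l ≤ h, Summable (fun n : ℕ =>
        1 / ((c * (n + 1) * (c * (n + 1) + (2 * h : ℝ)) : ℝ) : ℂ) ^ (s - l))) ∧
      (∑' n : ℕ,
        (((2 * (c * (n + 1)) + (2 * h : ℝ)) / (Nat.factorial (2 * h) : ℝ) *
            ∏ i ∈ Finset.Icc 1 (2 * h - 1), (c * (n + 1) + (i : ℝ)) : ℝ) : ℂ) /
          ((c * (n + 1) * (c * (n + 1) + (2 * h : ℝ)) : ℝ) : ℂ) ^ s) =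
        (2 / (Nat.factorial (2 * h) : ℂ)) *
          ∑ l ∈ Finset.range (h + 1), (b l : ℂ) *
            ∑' n : ℕ,
              1 / ((c * (n + 1) * (c * (n + 1) + (2 * h : ℝ)) : ℝ) : ℂ) ^ (s - l) :=
  z_odd_dim_decomposition_general h c hc b hb s hs
end

section
/- Let b, c > 0 be real numbers and let s be a complex number with 1/2 < Re(s) < 1. Then ∫_0^∞ (cx)^{−s}(cx+b)^{−s} dx = (1/(c·√π)) · (b/2)^{1−2s} · Γ(1−s)·Γ(s+1/2) / (2s−1), where Γ is the Gamma function and all complex powers of positive reals are principal powers. -/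
open MeasureTheory Set

/-!
The substitution `t = x / (x + b)` maps `(0, ∞)` onto `(0, 1)` and turns
`∫₀^∞ x^(u-1) (x+b)^(-(u+v)) dx` into `b^(-v) B(u, v)`; after scaling out `c`, the integral is
`c⁻¹ b^(1-2s) B(1-s, 2s-1) = c⁻¹ b^(1-2s) Γ(1-s) Γ(2s-1) / Γ(s)`, and Legendre's duplication
formula rewrites `Γ(2s-1) / Γ(s)` in terms of `Γ(s+1/2)`.
-/

lemma hasDerivAt_div_add_const {b x : ℝ} (hx : x + b ≠ 0) :
    HasDerivAt (fun y : ℝ => y / (y + b)) (b / (x + b) ^ 2) x := by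
  refine ((hasDerivAt_id' x).div ((hasDerivAt_id' x).add_const b) hx).congr_deriv ?_
  ring

lemma injOn_div_add_const {b : ℝ} (hb : b ≠ 0) :
    InjOn (fun x : ℝ => x / (x + b)) (Ioi (-b)) := by
  intro x hx y hy hxy
  have hx' : x + b ≠ 0 := by rw [mem_Ioi] at hx; linarith
  have hy' : y + b ≠ 0 := by rw [mem_Ioi] at hy; linarith
  rw [div_eq_div_iff hx' hy'] at hxy
  exact mul_right_cancel₀ hb (by linear_combination hxy)

lemma image_div_add_const_Ioi_zero {b : ℝ} (hb : 0 < b) :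
    (fun x : ℝ => x / (x + b)) '' Ioi 0 = Ioo 0 1 := by
  ext t
  constructor
  · rintro ⟨x, hx : 0 < x, rfl⟩
    exact ⟨by positivity, (div_lt_one (by positivity)).2 (by linarith)⟩
  · rintro ⟨ht0, ht1⟩
    have h1t : 0 < 1 - t := by linarith
    refine ⟨b * t / (1 - t), mem_Ioi.2 (by positivity), ?_⟩
    field_simp
    ring

namespace Complex

open scoped Real

lemma abs_deriv_smul_betaIntegrand_div_add_const {b x : ℝ} (hb : 0 < b) (hx : 0 < x)
    (u v : ℂ) :
    |b / (x + b) ^ 2| •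
        (((x / (x + b) : ℝ) : ℂ) ^ (u - 1) * (1 - ((x / (x + b) : ℝ) : ℂ)) ^ (v - 1)) =
      (b : ℂ) ^ v * ((x : ℂ) ^ (u - 1) * ((x + b : ℝ) : ℂ) ^ (-(u + v))) := by
  have hxb : 0 < x + b := by positivity
  have hY : ((x + b : ℝ) : ℂ) ≠ 0 := ofReal_ne_zero.2 hxb.ne'
  have hB : (b : ℂ) ≠ 0 := ofReal_ne_zero.2 hb.ne'
  have hYu : ((x + b : ℝ) : ℂ) ^ (u - 1) ≠ 0 := cpow_ne_zero_iff.2 (Or.inl hY)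
  have hYv : ((x + b : ℝ) : ℂ) ^ (v - 1) ≠ 0 := cpow_ne_zero_iff.2 (Or.inl hY)
  have h_one_sub : 1 - ((x / (x + b) : ℝ) : ℂ) = ((b / (x + b) : ℝ) : ℂ) := by
    rw [← ofReal_one, ← ofReal_sub]
    congr 1
    field_simp
    ring
  have hBv : (b : ℂ) ^ v = (b : ℂ) ^ (v - 1) * b := by simpa using cpow_add (v - 1) 1 hB
  rw [abs_of_pos (by positivity), h_one_sub, ofReal_div, ofReal_div,
    div_cpow_ofReal_nonneg hx.le hxb.le, div_cpow_ofReal_nonneg hb.le hxb.le, cpow_neg,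
    show u + v = (u - 1) + (v - 1) + 2 by ring, cpow_add _ _ hY, cpow_add _ _ hY,
    hBv, cpow_ofNat, real_smul]
  push_cast
  field_simp

theorem integral_Ioi_cpow_mul_add_cpow_eq_betaIntegral {b : ℝ} (hb : 0 < b) (u v : ℂ) :
    ∫ x in Ioi (0 : ℝ), (x : ℂ) ^ (u - 1) * ((x + b : ℝ) : ℂ) ^ (-(u + v)) =
      (b : ℂ) ^ (-v) * betaIntegral u v := by
  have hsubst := integral_image_eq_integral_abs_deriv_smul measurableSet_Ioi
    (fun x (hx : 0 < x) => (hasDerivAt_div_add_const (b := b) (by positivity)).hasDerivWithinAt)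
    ((injOn_div_add_const hb.ne').mono (Ioi_subset_Ioi (by linarith)))
    (fun t : ℝ => (t : ℂ) ^ (u - 1) * (1 - (t : ℂ)) ^ (v - 1))
  have hB : (b : ℂ) ≠ 0 := ofReal_ne_zero.2 hb.ne'
  rw [betaIntegral, intervalIntegral.integral_of_le zero_le_one, integral_Ioc_eq_integral_Ioo,
    ← image_div_add_const_Ioi_zero hb, hsubst,
    setIntegral_congr_fun measurableSet_Ioi
      fun x hx => abs_deriv_smul_betaIntegrand_div_add_const hb hx u v,
    integral_const_mul, ← mul_assoc, ← cpow_add _ _ hB, neg_add_cancel, cpow_zero, one_mul]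

lemma Gamma_mul_Gamma_add_half_eq_Gamma_two_mul_sub_one {s : ℂ} (hs : 2 * s - 1 ≠ 0) :
    Gamma s * Gamma (s + 1 / 2) = (2 * s - 1) * Gamma (2 * s - 1) * 2 ^ (1 - 2 * s) * √π := by
  rw [Gamma_mul_Gamma_add_half, ← Gamma_add_one _ hs, sub_add_cancel]

lemma betaIntegral_one_sub_two_mul_sub_one {s : ℂ} (hs1 : 1 / 2 < s.re) (hs2 : s.re < 1) :
    betaIntegral (1 - s) (2 * s - 1) =
      Gamma (1 - s) * Gamma (s + 1 / 2) / (2 ^ (1 - 2 * s) * (2 * s - 1) * √π) := by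
  have hu : 0 < (1 - s).re := by rw [sub_re, one_re]; linarith
  have hv : 0 < (2 * s - 1).re := by
    simp only [sub_re, mul_re, re_ofNat, im_ofNat, zero_mul, sub_zero, one_re]; linarith
  have hs : 2 * s - 1 ≠ 0 := fun h => hv.ne' (by rw [h, zero_re])
  have hGs : Gamma s ≠ 0 := Gamma_ne_zero_of_re_pos (by linarith)
  have h2 : (2 : ℂ) ^ (1 - 2 * s) ≠ 0 := cpow_ne_zero_iff.2 (Or.inl two_ne_zero)
  have hπ : ((√π : ℝ) : ℂ) ≠ 0 := ofReal_ne_zero.2 (Real.sqrt_pos.2 Real.pi_pos).ne'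
  rw [betaIntegral_eq_Gamma_mul_div _ _ hu hv, show 1 - s + (2 * s - 1) = s by ring,
    div_eq_div_iff hGs (mul_ne_zero (mul_ne_zero h2 hs) hπ)]
  linear_combination (-Gamma (1 - s)) * Gamma_mul_Gamma_add_half_eq_Gamma_two_mul_sub_one hs

end Complex

/-- Closed form for the full-line integral used in the proof of Lemma 5. -/
theorem integral_cpow_mul_cpow (b c : ℝ) (hb : 0 < b) (hc : 0 < c) (s : ℂ)
    (hs1 : 1 / 2 < s.re) (hs2 : s.re < 1) :
    (∫ x in Ioi (0 : ℝ), ((c * x : ℝ) : ℂ) ^ (-s) * ((c * x + b : ℝ) : ℂ) ^ (-s)) =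
      ((1 / (c * Real.sqrt Real.pi) : ℝ) : ℂ) * ((b / 2 : ℝ) : ℂ) ^ (1 - 2 * s) *
        Complex.Gamma (1 - s) * Complex.Gamma (s + 1 / 2) / (2 * s - 1) := by
  have hbeta := Complex.integral_Ioi_cpow_mul_add_cpow_eq_betaIntegral hb (1 - s) (2 * s - 1)
  rw [show 1 - s - 1 = -s by ring, show -(1 - s + (2 * s - 1)) = -s by ring,
    show -(2 * s - 1) = 1 - 2 * s by ring,
    Complex.betaIntegral_one_sub_two_mul_sub_one hs1 hs2] at hbeta
  rw [integral_comp_mul_left_Ioi (fun x => ((x : ℝ) : ℂ) ^ (-s) * ((x + b : ℝ) : ℂ) ^ (-s)) 0 hc,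
    mul_zero, hbeta, Complex.ofReal_div b 2,
    Complex.div_cpow_ofReal_nonneg hb.le zero_le_two, Complex.real_smul]
  push_cast
  simp only [div_eq_mul_inv, mul_inv]
  ring
end

section
/- Let b, c > 0 be real numbers and let s be a complex number with Re(s) > 1/2. Then ∫_1^∞ (cx)^{−s}(cx+b)^{−s} dx = c^{−s}(c+b)^{−s}/(2s−1) · Σ_{k=0}^∞ [ (s)_k / (2s)_k ] · (b/(c+b))^k, where (w)_k = w(w+1)···(w+k−1) denotes the Pochhammer symbol (rising factorial, (w)_0 = 1), and the series on the right converges absolutely. -/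
open MeasureTheory Set
open scoped Nat

/-!
Substituting `x = 1/t` turns the integral into `c^{-s} (c+b)^{-s} ∫_0^1 t^{2s-2} (1 - z(1-t))^{-s} dt`
with `z = b/(c+b)`. Expanding `(1 - w)^{-s} = Σ (s)_k w^k / k!` and integrating term by term
(the binomial series converges absolutely at `|w| ≤ z < 1`), the `k`-th term is a Beta integral
`B(2s-1, k+1) = k! / ((2s-1) (2s)_k)`, which leaves the coefficients `(s)_k / (2s)_k` of
`F(s, 1; 2s; z)`. Absolute convergence of that series is the radius-one property of `₂F₁`.
-/

theorem natCast_ne_neg_of_re_pos {u : ℂ} (hu : 0 < u.re) (k : ℕ) : (k : ℂ) ≠ -u := by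
  intro hk
  have := congrArg Complex.re hk
  simp only [Complex.natCast_re, Complex.neg_re] at this
  linarith [(Nat.cast_nonneg k : (0 : ℝ) ≤ k)]

theorem ascPochhammer_eval_ne_zero_of_re_pos {u : ℂ} (hu : 0 < u.re) (n : ℕ) :
    (ascPochhammer ℂ n).eval u ≠ 0 := by
  rw [Ne, ascPochhammer_eval_eq_zero_iff]
  rintro ⟨k, -, hk⟩
  exact natCast_ne_neg_of_re_pos hu k (by rw [hk])

theorem ascPochhammer_eval_eq_prod_range {R : Type*} [CommSemiring R] (n : ℕ) (u : R) :
    (ascPochhammer R n).eval u = ∏ j ∈ Finset.range n, (u + j) := by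
  induction n with
  | zero => simp
  | succ n ih => rw [ascPochhammer_succ_eval, ih, Finset.prod_range_succ]

theorem ascPochhammer_succ_eval_left {R : Type*} [CommSemiring R] (n : ℕ) (u : R) :
    (ascPochhammer R (n + 1)).eval u = u * (ascPochhammer R n).eval (u + 1) := by
  simp [ascPochhammer_succ_left]

theorem ascPochhammer_eval_div_factorial (a : ℂ) (n : ℕ) :
    (ascPochhammer ℂ n).eval a / (n ! : ℂ) = Ring.choose (a + n - 1) n := by
  rw [← Ring.multichoose_eq, div_eq_iff (by exact_mod_cast n.factorial_ne_zero),
    ← Polynomial.ascPochhammer_smeval_eq_eval,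
    ← Ring.factorial_nsmul_multichoose_eq_ascPochhammer, nsmul_eq_mul, mul_comm]

theorem hasSum_ascPochhammer_div_factorial_mul_pow (a : ℂ) {z : ℂ} (hz : ‖z‖ < 1) :
    HasSum (fun n => (ascPochhammer ℂ n).eval a / (n ! : ℂ) * z ^ n) ((1 - z) ^ (-a)) := by
  have hz' : z ∈ Metric.eball (0 : ℂ) 1 := by
    rwa [mem_eball_zero_iff, ← ofReal_norm, ENNReal.ofReal_lt_one]
  simpa [FormalMultilinearSeries.ofScalars_apply_eq, ascPochhammer_eval_div_factorial,
    Complex.cpow_neg, mul_comm] using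
    (Complex.one_div_one_sub_cpow_hasFPowerSeriesOnBall_zero a).hasSum hz'

theorem summable_norm_ascPochhammer_div_factorial_mul_pow (a : ℂ) {z : ℂ} (hz : ‖z‖ < 1) :
    Summable fun n => ‖(ascPochhammer ℂ n).eval a / (n ! : ℂ) * z ^ n‖ := by
  have hrad := (Complex.one_div_one_sub_cpow_hasFPowerSeriesOnBall_zero a).r_le
  have := FormalMultilinearSeries.summable_norm_mul_pow _ (r := ‖z‖₊)
    ((ENNReal.coe_lt_one_iff.mpr hz).trans_le hrad)
  simpa [FormalMultilinearSeries.ofScalars_norm, ascPochhammer_eval_div_factorial] using this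

theorem summable_norm_ascPochhammer_div_ascPochhammer_mul_pow {a c : ℂ} (ha : 0 < a.re)
    (hc : 0 < c.re) {z : ℂ} (hz : ‖z‖ < 1) :
    Summable fun n => ‖(ascPochhammer ℂ n).eval a / (ascPochhammer ℂ n).eval c * z ^ n‖ := by
  have hrad : (ordinaryHypergeometricSeries ℂ a 1 c).radius = 1 :=
    ordinaryHypergeometricSeries_radius_eq_one ℂ a 1 c fun k => ⟨natCast_ne_neg_of_re_pos ha k,
      natCast_ne_neg_of_re_pos (by simp) k, natCast_ne_neg_of_re_pos hc k⟩
  have := FormalMultilinearSeries.summable_norm_mul_pow _ (r := ‖z‖₊)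
    (hrad ▸ ENNReal.coe_lt_one_iff.mpr hz)
  simp only [ordinaryHypergeometricSeries, FormalMultilinearSeries.ofScalars_norm] at this
  refine this.congr fun n => ?_
  have : (n ! : ℂ) ≠ 0 := by exact_mod_cast n.factorial_ne_zero
  simp only [ordinaryHypergeometricCoefficient, ascPochhammer_eval_one, norm_mul, norm_div,
    norm_pow, norm_inv, coe_nnnorm]
  field_simp

theorem integral_Ioi_one_eq_integral_Ioo_inv {E : Type*} [NormedAddCommGroup E]
    [NormedSpace ℝ E] (f : ℝ → E) :
    ∫ x in Ioi (1 : ℝ), f x = ∫ t in Ioo (0 : ℝ) 1, (t ^ 2)⁻¹ • f t⁻¹ := by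
  have himage : Inv.inv '' Ioo (0 : ℝ) 1 = Ioi 1 := by
    rw [Set.image_inv_eq_inv, Set.inv_Ioo_0_left one_pos, inv_one]
  rw [← himage, integral_image_eq_integral_abs_deriv_smul measurableSet_Ioo
    (fun t ht => (hasDerivAt_inv ht.1.ne').hasDerivWithinAt) inv_injective.injOn]
  refine setIntegral_congr_fun measurableSet_Ioo fun t _ => ?_
  rw [abs_neg, abs_of_nonneg (by positivity)]

theorem integral_mul_tsum_mul_pow {𝕜 α : Type*} [RCLike 𝕜] [MeasurableSpace α] {μ : Measure α}
    {g f : α → 𝕜} (hg : Integrable g μ) (hf : AEStronglyMeasurable f μ)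
    (hf_le : ∀ᵐ x ∂μ, ‖f x‖ ≤ 1) {a : ℕ → 𝕜} (ha : Summable fun k => ‖a k‖) :
    ∫ x, g x * ∑' k, a k * f x ^ k ∂μ = ∑' k, a k * ∫ x, g x * f x ^ k ∂μ := by
  have hint : ∀ k, Integrable (fun x => g x * f x ^ k) μ := fun k =>
    hg.mul_bdd (hf.pow k) (c := 1) <| hf_le.mono fun x hx => by
      simpa using pow_le_one₀ (norm_nonneg _) hx
  have hnorm : ∀ k, ∫ x, ‖a k * (g x * f x ^ k)‖ ∂μ ≤ ‖a k‖ * ∫ x, ‖g x‖ ∂μ := fun k => by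
    rw [← integral_const_mul]
    refine integral_mono_ae ((hint k).const_mul _).norm (hg.norm.const_mul _) ?_
    filter_upwards [hf_le] with x hx
    simp only [norm_mul, norm_pow]
    gcongr
    exact mul_le_of_le_one_right (norm_nonneg _) (pow_le_one₀ (norm_nonneg _) hx)
  calc ∫ x, g x * ∑' k, a k * f x ^ k ∂μ = ∫ x, ∑' k, a k * (g x * f x ^ k) ∂μ := by
        congr 1 with x
        rw [← tsum_mul_left]
        congr 1 with k
        ring
    _ = ∑' k, ∫ x, a k * (g x * f x ^ k) ∂μ :=
        (integral_tsum_of_summable_integral_norm (fun k => (hint k).const_mul _)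
          (Summable.of_nonneg_of_le (fun k => integral_nonneg fun x => norm_nonneg _) hnorm
            (ha.mul_right _))).symm
    _ = ∑' k, a k * ∫ x, g x * f x ^ k ∂μ := by simp_rw [integral_const_mul]

theorem integrableOn_cpow_mul_one_sub_pow {u : ℂ} (hu : 0 < u.re) (k : ℕ) :
    IntegrableOn (fun t : ℝ => (t : ℂ) ^ (u - 1) * (1 - (t : ℂ)) ^ k) (Ioo 0 1) := by
  have := Complex.betaIntegral_convergent hu (v := k + 1) (by simp; positivity)
  simp only [add_sub_cancel_right, Complex.cpow_natCast] at this
  exact (intervalIntegrable_iff_integrableOn_Ioo_of_le zero_le_one).mp this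

theorem integral_Ioo_cpow_mul_one_sub_pow {u : ℂ} (hu : 0 < u.re) (k : ℕ) :
    ∫ t in Ioo (0 : ℝ) 1, (t : ℂ) ^ (u - 1) * (1 - (t : ℂ)) ^ k =
      k ! / (ascPochhammer ℂ (k + 1)).eval u := by
  have := Complex.betaIntegral_eval_nat_add_one_right hu k
  simp only [Complex.betaIntegral, add_sub_cancel_right, Complex.cpow_natCast,
    intervalIntegral.integral_of_le zero_le_one, integral_Ioc_eq_integral_Ioo] at this
  rw [this, ascPochhammer_eval_eq_prod_range]

theorem integral_Ioo_cpow_mul_one_sub_mul_cpow_neg {u : ℂ} (hu : 0 < u.re) (a : ℂ) {z : ℂ}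
    (hz : ‖z‖ < 1) :
    ∫ t in Ioo (0 : ℝ) 1, (t : ℂ) ^ (u - 1) * (1 - z * (1 - t)) ^ (-a) =
      ∑' k, (ascPochhammer ℂ k).eval a / (ascPochhammer ℂ (k + 1)).eval u * z ^ k := by
  have hnorm : ∀ t ∈ Ioo (0 : ℝ) 1, ‖1 - (t : ℂ)‖ ≤ 1 := fun t ⟨ht0, ht1⟩ => by
    rw [← Complex.ofReal_one, ← Complex.ofReal_sub, Complex.norm_real, Real.norm_of_nonneg] <;>
      linarith
  have hexpand : ∀ t ∈ Ioo (0 : ℝ) 1, (1 - z * (1 - t)) ^ (-a) =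
      ∑' k, (ascPochhammer ℂ k).eval a / (k ! : ℂ) * z ^ k * (1 - (t : ℂ)) ^ k := fun t ht => by
    have hzt : ‖z * (1 - t)‖ < 1 := by
      rw [norm_mul]
      exact (mul_le_of_le_one_right (norm_nonneg _) (hnorm t ht)).trans_lt hz
    simp_rw [mul_assoc, ← mul_pow]
    exact (hasSum_ascPochhammer_div_factorial_mul_pow a hzt).tsum_eq.symm
  have hg : IntegrableOn (fun t : ℝ => (t : ℂ) ^ (u - 1)) (Ioo 0 1) := by
    simpa using integrableOn_cpow_mul_one_sub_pow hu 0
  rw [setIntegral_congr_fun measurableSet_Ioo fun t ht => by rw [hexpand t ht],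
    integral_mul_tsum_mul_pow hg (by fun_prop) (ae_restrict_of_forall_mem measurableSet_Ioo hnorm)
      (summable_norm_ascPochhammer_div_factorial_mul_pow a hz)]
  refine tsum_congr fun k => ?_
  rw [integral_Ioo_cpow_mul_one_sub_pow hu k]
  have : (k ! : ℂ) ≠ 0 := by exact_mod_cast k.factorial_ne_zero
  field_simp

theorem ofReal_mul_inv_cpow_neg {x t : ℝ} (hx : 0 ≤ x) (ht : 0 < t) (s : ℂ) :
    ((x * t⁻¹ : ℝ) : ℂ) ^ (-s) = (x : ℂ) ^ (-s) * (t : ℂ) ^ s := by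
  rw [Complex.ofReal_mul, Complex.mul_cpow_ofReal_nonneg hx (inv_nonneg.mpr ht.le),
    Complex.ofReal_inv, Complex.inv_cpow _ _ (by simp [Complex.arg_ofReal_of_nonneg ht.le,
      Real.pi_ne_zero.symm]), ← Complex.cpow_neg, neg_neg]

theorem inv_sq_smul_cpow_neg_mul_cpow_neg {b c t : ℝ} (hb : 0 ≤ b) (hc : 0 < c) (ht : 0 < t)
    (s : ℂ) :
    (t ^ 2)⁻¹ • (((c * t⁻¹ : ℝ) : ℂ) ^ (-s) * ((c * t⁻¹ + b : ℝ) : ℂ) ^ (-s)) =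
      (c : ℂ) ^ (-s) * ((c + b : ℝ) : ℂ) ^ (-s) *
        ((t : ℂ) ^ (2 * s - 1 - 1) * (1 - ((b / (c + b) : ℝ) : ℂ) * (1 - t)) ^ (-s)) := by
  have hcb : 0 < c + b := by linarith
  have hw : 0 < 1 - b / (c + b) * (1 - t) := by
    rw [show 1 - b / (c + b) * (1 - t) = (c + b * t) / (c + b) by field_simp; ring]
    positivity
  have hsplit : c * t⁻¹ + b = (c + b) * (1 - b / (c + b) * (1 - t)) * t⁻¹ := by
    field_simp
    ring
  have htC : (t : ℂ) ≠ 0 := by exact_mod_cast ht.ne'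
  have hpow : (t : ℂ) ^ (2 * s - 1 - 1) = (t : ℂ) ^ s * (t : ℂ) ^ s * ((t : ℂ) ^ 2)⁻¹ := by
    rw [show 2 * s - 1 - 1 = s + s - 2 by ring, Complex.cpow_sub _ _ htC,
      Complex.cpow_add _ _ htC, Complex.cpow_two, div_eq_mul_inv]
  rw [hsplit, ofReal_mul_inv_cpow_neg hc.le ht, ofReal_mul_inv_cpow_neg (by positivity) ht,
    Complex.ofReal_mul, Complex.mul_cpow_ofReal_nonneg hcb.le hw.le, hpow, Complex.real_smul]
  push_cast
  ring

/-- Hypergeometric representation of the tail integral used in Lemma 5: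
`∫_1^∞ (cx)^{-s}(cx+b)^{-s} dx = c^{-s}(c+b)^{-s}(2s-1)^{-1} F(s,1;2s;b/(c+b))`. -/
theorem integral_tail_hypergeometric (b c : ℝ) (hb : 0 < b) (hc : 0 < c) (s : ℂ)
    (hs : 1 / 2 < s.re) :
    Summable (fun k : ℕ =>
        ‖(ascPochhammer ℂ k).eval s / (ascPochhammer ℂ k).eval (2 * s) *
          ((b / (c + b) : ℝ) : ℂ) ^ k‖) ∧
      (∫ x in Ioi (1 : ℝ), ((c * x : ℝ) : ℂ) ^ (-s) * ((c * x + b : ℝ) : ℂ) ^ (-s)) =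
        (c : ℂ) ^ (-s) * ((c + b : ℝ) : ℂ) ^ (-s) / (2 * s - 1) *
          ∑' k : ℕ,
            (ascPochhammer ℂ k).eval s / (ascPochhammer ℂ k).eval (2 * s) *
              ((b / (c + b) : ℝ) : ℂ) ^ k := by
  have hz : ‖((b / (c + b) : ℝ) : ℂ)‖ < 1 := by
    rw [Complex.norm_real, Real.norm_of_nonneg (by positivity)]
    exact (div_lt_one (by positivity)).mpr (by linarith)
  have hs0 : 0 < s.re := by linarith
  have h2s : 0 < (2 * s).re := by simp; linarith
  have h2s1 : 0 < (2 * s - 1).re := by simp; linarith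
  refine ⟨summable_norm_ascPochhammer_div_ascPochhammer_mul_pow hs0 h2s hz, ?_⟩
  rw [integral_Ioi_one_eq_integral_Ioo_inv, setIntegral_congr_fun measurableSet_Ioo
      fun t ht => inv_sq_smul_cpow_neg_mul_cpow_neg hb.le hc ht.1 s,
    integral_const_mul, integral_Ioo_cpow_mul_one_sub_mul_cpow_neg h2s1 s hz,
    div_mul_eq_mul_div, mul_div_assoc, ← tsum_div_const]
  congr 1
  refine tsum_congr fun k => ?_
  rw [ascPochhammer_succ_eval_left, sub_add_cancel]
  have h2s1_ne : 2 * s - 1 ≠ 0 := fun h => by simp [h] at h2s1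
  have := ascPochhammer_eval_ne_zero_of_re_pos h2s k
  field_simp
end

section
/- Let b, c > 0 be real numbers. There exists a function Z : ℂ → ℂ, complex analytic on ℂ ∖ {1/2 − m : m a nonnegative integer}, such that Z(s) = z_odd(s,0,b,c) (the convergent series) for all s with Re(s) > 1/2, and for every nonnegative integer m, Z has a simple pole at s = 1/2 − m with lim_{s→1/2−m} (s−(1/2−m))·Z(s) = ((−1)^m / 2^{m+1}) · ((2m−1)!!/m!) · (1/c) · (b/2)^{2m}, where (2m−1)!! is the double factorial with the convention (−1)!! = 1. -/
/-!
Put `d = b / (2c)` and `u = n + 1 + d`. Then `c(n+1) (c(n+1) + b) = c² u² (1 - d²/u²)`, and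
expanding `(1 - d²/u²)^{-s}` by the binomial series and summing over `n` first gives, for `Re s > 1/2`
(where the double series converges absolutely),
`z_odd(s) = (c²)^{-s} ∑ₘ binom(s+m-1, m) d^{2m} ζ(2s + 2m, 1 + d)`
with `ζ(w, x) = ∑ₙ (n + x)^{-w}` the Hurwitz zeta function.
The right-hand side is meromorphic on all of `ℂ`: on a bounded set only finitely many terms can have
a pole, and the remaining tail is dominated by `∑ₘ binom(R+m-1, m) (d/(1+d))^{2m} < ∞`.
The `m`-th term has a simple pole only at `s = 1/2 - m`, inherited from the pole of `ζ(·, 1 + d)`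
at `1` with residue `1`; the substitution `w = 2s + 2m` halves it, so the residue of `z_odd`
there is `(c²)^{m - 1/2} binom(-1/2, m) d^{2m} / 2`.
-/

open Filter Topology Finset
open scoped Nat

theorem Ring.choose_eq_prod_range {K : Type*} [Field K] [CharZero K] (r : K) (m : ℕ) :
    Ring.choose r m = ∏ j ∈ range m, (r - j) / (j + 1) := by
  rw [Ring.choose_eq_smul, ← Polynomial.aeval_eq_smeval, Polynomial.aeval_def,
    ← Polynomial.eval_map, descPochhammer_map, descPochhammer_eval_eq_prod_range,
    prod_div_distrib, ← prod_range_add_one_eq_factorial, smul_eq_mul, inv_mul_eq_div]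
  push_cast
  ring_nf

theorem Nat.doubleFactorial_two_mul_sub_one_eq_prod (m : ℕ) :
    (2 * m - 1)‼ = ∏ j ∈ range m, (2 * j + 1) := by
  induction m with
  | zero => rfl
  | succ m ih =>
    rw [prod_range_succ, ← ih, show 2 * (m + 1) - 1 = 2 * m + 1 by omega,
      Nat.doubleFactorial_add_one, mul_comm]

theorem Ring.choose_neg_half {K : Type*} [Field K] [CharZero K] (m : ℕ) :
    Ring.choose (-1 / 2 : K) m = (-1) ^ m * (2 * m - 1)‼ / (2 ^ m * m !) := by
  have hfactor (j : ℕ) : (-1 / 2 - j : K) / (j + 1) = -1 * (2 * j + 1) / (2 * (j + 1)) := by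
    field_simp
    ring
  rw [Ring.choose_eq_prod_range, prod_congr rfl fun j _ => hfactor j, prod_div_distrib,
    prod_mul_distrib, prod_mul_distrib, prod_const, prod_const, card_range,
    Nat.doubleFactorial_two_mul_sub_one_eq_prod, ← prod_range_add_one_eq_factorial]
  push_cast
  rfl

theorem Complex.norm_choose_add_sub_one_le {s : ℂ} {R : ℝ} (hs : ‖s‖ ≤ R) (m : ℕ) :
    ‖Ring.choose (s + m - 1) m‖ ≤ Ring.choose (R + m - 1) m := by
  rw [Ring.choose_eq_prod_range, Ring.choose_eq_prod_range, norm_prod]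
  refine prod_le_prod (fun _ _ => norm_nonneg _) fun j hj => ?_
  have hjm : (j : ℝ) + 1 ≤ m := by exact_mod_cast mem_range.mp hj
  have hnum : s + m - 1 - j = s + ((m - 1 - j : ℝ) : ℂ) := by push_cast; ring
  rw [norm_div, hnum, show (j : ℂ) + 1 = ((j + 1 : ℝ) : ℂ) by push_cast; rfl, norm_real,
    Real.norm_of_nonneg (by positivity)]
  gcongr
  calc ‖s + ((m - 1 - j : ℝ) : ℂ)‖ ≤ ‖s‖ + (m - 1 - j) := by
        refine (norm_add_le _ _).trans ?_
        rw [norm_real, Real.norm_of_nonneg (by linarith)]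
    _ ≤ R + m - 1 - j := by linarith

theorem Complex.hasSum_choose_mul_pow (a : ℂ) {z : ℂ} (hz : ‖z‖ < 1) :
    HasSum (fun n : ℕ => Ring.choose (a + n - 1) n * z ^ n) (1 / (1 - z) ^ a) := by
  have := (one_div_one_sub_cpow_hasFPowerSeriesOnBall_zero a).hasSum (y := z)
    (by simpa [← ENNReal.coe_one, ← NNReal.coe_lt_one] using hz)
  simpa [FormalMultilinearSeries.ofScalars_apply_eq, mul_comm] using this

theorem Real.summable_choose_mul_pow (a : ℝ) {x : ℝ} (hx : |x| < 1) :
    Summable (fun n : ℕ => Ring.choose (a + n - 1) n * x ^ n) := by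
  have := (one_div_one_sub_rpow_hasFPowerSeriesOnBall_zero a).hasSum (y := x)
    (by simpa [← ENNReal.coe_one, ← NNReal.coe_lt_one] using hx)
  simpa [FormalMultilinearSeries.ofScalars_apply_eq, mul_comm] using this.summable

lemma hasSum_choose_mul_pow_div_cpow {u d : ℝ} (hu : 0 < u) (hdu : d ^ 2 < u ^ 2) (s : ℂ) :
    HasSum (fun m : ℕ => Ring.choose (s + m - 1) m * (d : ℂ) ^ (2 * m) / (u : ℂ) ^ (2 * s + 2 * m))
      (1 / ((u ^ 2 - d ^ 2 : ℝ) : ℂ) ^ s) := by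
  set t : ℝ := d ^ 2 / u ^ 2
  have ht0 : 0 ≤ t := by positivity
  have ht1 : t < 1 := (div_lt_one (by positivity)).mpr hdu
  have hu' : (u : ℂ) ≠ 0 := by exact_mod_cast hu.ne'
  have hsq : (u : ℂ) ^ (2 * s) = ((u ^ 2 : ℝ) : ℂ) ^ s := by
    rw [← Real.rpow_two, ← Complex.cpow_mul_ofReal_nonneg hu.le]
    norm_num
  have hterm (m : ℕ) : Ring.choose (s + m - 1) m * (d : ℂ) ^ (2 * m) / (u : ℂ) ^ (2 * s + 2 * m) =
      Ring.choose (s + m - 1) m * (t : ℂ) ^ m / (u : ℂ) ^ (2 * s) := by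
    rw [Complex.cpow_add _ _ hu', show (2 * m : ℂ) = ((2 * m : ℕ) : ℂ) by push_cast; ring,
      Complex.cpow_natCast]
    simp only [t]
    push_cast
    ring
  have hsum : 1 / ((u ^ 2 - d ^ 2 : ℝ) : ℂ) ^ s = 1 / (1 - (t : ℂ)) ^ s / (u : ℂ) ^ (2 * s) := by
    rw [hsq, show u ^ 2 - d ^ 2 = u ^ 2 * (1 - t) by simp only [t]; field_simp, Complex.ofReal_mul,
      Complex.mul_cpow_ofReal_nonneg (by positivity) (by linarith)]
    push_cast
    field_simp
  simp only [hterm, hsum]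
  exact (Complex.hasSum_choose_mul_pow s (by simpa [abs_of_nonneg ht0] using ht1)).div_const _

/-- `∑ₙ (n + x)⁻ʷ` for `x > 0`, continued to `w ≠ 1`. Mathlib's `hurwitzZeta a` needs `a ∈ [0, 1]`,
so we take `a = x - (⌈x⌉₊ - 1) ∈ (0, 1]` and drop the first `⌈x⌉₊ - 1` terms. -/
noncomputable def shiftedHurwitzZeta (x : ℝ) (w : ℂ) : ℂ :=
  HurwitzZeta.hurwitzZeta (x - (⌈x⌉₊ - 1 : ℕ) : ℝ) w -
    ∑ j ∈ range (⌈x⌉₊ - 1), 1 / ((j : ℂ) + (x - (⌈x⌉₊ - 1 : ℕ) : ℝ)) ^ w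

section shiftedHurwitzZeta

variable {x : ℝ}

lemma shiftedHurwitzZeta_offset_mem (hx : 0 < x) : x - (⌈x⌉₊ - 1 : ℕ) ∈ Set.Ioc (0 : ℝ) 1 := by
  have hceil : 1 ≤ ⌈x⌉₊ := Nat.one_le_iff_ne_zero.mpr (Nat.ceil_pos.mpr hx).ne'
  rw [Nat.cast_sub hceil, Nat.cast_one]
  constructor
  · linarith [Nat.ceil_lt_add_one hx.le]
  · linarith [Nat.le_ceil x]

lemma differentiable_sum_one_div_cpow {a : ℝ} (ha : 0 < a) (q : ℕ) :
    Differentiable ℂ fun w : ℂ => ∑ j ∈ range q, 1 / ((j : ℂ) + a) ^ w := by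
  have hbase (j : ℕ) : (j : ℂ) + a ≠ 0 := by exact_mod_cast (by positivity : (j : ℝ) + a ≠ 0)
  refine Differentiable.fun_sum fun j _ => (differentiable_const 1).div
    (differentiable_id.const_cpow (Or.inl (hbase j))) fun w => ?_
  exact Complex.cpow_ne_zero_iff.mpr (Or.inl (hbase j))

theorem hasSum_shiftedHurwitzZeta (hx : 0 < x) {w : ℂ} (hw : 1 < w.re) :
    HasSum (fun n : ℕ => 1 / ((n + x : ℝ) : ℂ) ^ w) (shiftedHurwitzZeta x w) := by
  have ha := shiftedHurwitzZeta_offset_mem hx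
  have := HurwitzZeta.hasSum_hurwitzZeta_of_one_lt_re ⟨ha.1.le, ha.2⟩ hw
  rw [← hasSum_nat_add_iff' (⌈x⌉₊ - 1)] at this
  have hshift (n : ℕ) :
      ((n + (⌈x⌉₊ - 1) : ℕ) : ℂ) + ((x - (⌈x⌉₊ - 1 : ℕ) : ℝ) : ℂ) = ((n + x : ℝ) : ℂ) := by
    push_cast
    ring
  simp only [hshift] at this
  exact this

theorem differentiableAt_shiftedHurwitzZeta (hx : 0 < x) {w : ℂ} (hw : w ≠ 1) :
    DifferentiableAt ℂ (shiftedHurwitzZeta x) w :=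
  (HurwitzZeta.differentiableAt_hurwitzZeta _ hw).sub
    ((differentiable_sum_one_div_cpow (shiftedHurwitzZeta_offset_mem hx).1 _) w)

theorem shiftedHurwitzZeta_residue_one (hx : 0 < x) :
    Tendsto (fun w => (w - 1) * shiftedHurwitzZeta x w) (𝓝[≠] 1) (𝓝 1) := by
  have hsum := (differentiable_sum_one_div_cpow (shiftedHurwitzZeta_offset_mem hx).1
    (⌈x⌉₊ - 1)).continuous.tendsto 1
  have hlin : Tendsto (fun w : ℂ => w - 1) (𝓝[≠] 1) (𝓝 0) :=
    tendsto_sub_nhds_zero_iff.mpr nhdsWithin_le_nhds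
  simpa [shiftedHurwitzZeta, mul_sub] using
    (HurwitzZeta.hurwitzZeta_residue_one _).sub (hlin.mul (hsum.mono_left nhdsWithin_le_nhds))

theorem norm_shiftedHurwitzZeta_le (hx : 0 < x) {w : ℂ} (hw : 2 ≤ w.re) :
    ‖shiftedHurwitzZeta x w‖ ≤ x ^ (2 - w.re) * ∑' n : ℕ, 1 / (n + x) ^ (2 : ℝ) := by
  have hsum : Summable fun n : ℕ => 1 / (n + x) ^ (2 : ℝ) := by
    simpa [abs_of_pos (by positivity : (0 : ℝ) < _ + x)] using
      (Real.summable_one_div_nat_add_rpow x 2).mpr one_lt_two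
  refine (hasSum_shiftedHurwitzZeta hx (by linarith)).norm_le_of_bounded
    (hsum.hasSum.mul_left _) fun n => ?_
  have hn : 0 < (n : ℝ) + x := by positivity
  rw [norm_div, norm_one, Complex.norm_cpow_eq_rpow_re_of_pos hn]
  calc 1 / (n + x) ^ w.re = (n + x) ^ (2 - w.re) * (1 / (n + x) ^ (2 : ℝ)) := by
        rw [Real.rpow_sub hn]
        field_simp
    _ ≤ x ^ (2 - w.re) * (1 / (n + x) ^ (2 : ℝ)) := by
        refine mul_le_mul_of_nonneg_right (Real.rpow_le_rpow_of_nonpos hx ?_ (by linarith))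
          (by positivity)
        linarith [n.cast_nonneg (α := ℝ)]

end shiftedHurwitzZeta

lemma tendsto_sub_mul_add_of_continuousAt {𝕜 : Type*} [NormedField 𝕜] {f g : 𝕜 → 𝕜} {a L : 𝕜}
    (hf : ContinuousAt f a) (hg : Tendsto (fun x => (x - a) * g x) (𝓝[≠] a) (𝓝 L)) :
    Tendsto (fun x => (x - a) * (f x + g x)) (𝓝[≠] a) (𝓝 L) := by
  have hlin : Tendsto (fun x => x - a) (𝓝[≠] a) (𝓝 0) :=
    tendsto_sub_nhds_zero_iff.mpr nhdsWithin_le_nhds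
  simpa [mul_add] using (hlin.mul (hf.tendsto.mono_left nhdsWithin_le_nhds)).add hg

lemma two_mul_add_natCast_eq_one_iff {s : ℂ} {m : ℕ} : 2 * s + 2 * m = 1 ↔ s = 1 / 2 - m := by
  constructor <;> intro h
  · linear_combination h / 2
  · linear_combination 2 * h

lemma ne_half_sub_natCast {s : ℂ} {R : ℝ} (hs : ‖s‖ ≤ R) {m : ℕ} (hm : R + 1 ≤ m) :
    s ≠ 1 / 2 - m := by
  rintro rfl
  have hre : (1 / 2 - m : ℂ).re = 1 / 2 - m := by simp
  linarith [(abs_le.mp ((Complex.abs_re_le_norm (1 / 2 - m : ℂ)).trans hs)).1]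

lemma differentiable_choose_add_sub_one (m : ℕ) :
    Differentiable ℂ fun s : ℂ => Ring.choose (s + m - 1) m := by
  simp only [Ring.choose_eq_prod_range]
  fun_prop

noncomputable def zOddTerm (d : ℝ) (s : ℂ) (m : ℕ) : ℂ :=
  Ring.choose (s + m - 1) m * (d : ℂ) ^ (2 * m) * shiftedHurwitzZeta (1 + d) (2 * s + 2 * m)

noncomputable def zOddSeries (d : ℝ) (s : ℂ) : ℂ :=
  ∑' m : ℕ, zOddTerm d s m

noncomputable def zOddDoubleTerm (d : ℝ) (s : ℂ) (n m : ℕ) : ℂ :=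
  Ring.choose (s + m - 1) m * (d : ℂ) ^ (2 * m) / ((n + (1 + d) : ℝ) : ℂ) ^ (2 * s + 2 * m)

section zOddSeries

variable {d : ℝ}

lemma differentiableAt_zOddTerm (hd : 0 ≤ d) {s : ℂ} {m : ℕ} (hs : s ≠ 1 / 2 - m) :
    DifferentiableAt ℂ (fun s => zOddTerm d s m) s := by
  have hH : DifferentiableAt ℂ (shiftedHurwitzZeta (1 + d)) (2 * s + 2 * m) :=
    differentiableAt_shiftedHurwitzZeta (by linarith)
      (mt two_mul_add_natCast_eq_one_iff.mp hs)
  exact ((differentiable_choose_add_sub_one m s).mul_const _).mul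
    (hH.comp (f := fun s : ℂ => 2 * s + 2 * m) s (by fun_prop))

lemma summable_choose_mul_div_one_add_sq_pow (hd : 0 ≤ d) (R : ℝ) :
    Summable fun m : ℕ => Ring.choose (R + m - 1) m * ((d / (1 + d)) ^ 2) ^ m := by
  refine Real.summable_choose_mul_pow R ?_
  rw [abs_of_nonneg (by positivity), sq_lt_one_iff₀ (by positivity), div_lt_one (by linarith)]
  linarith

lemma exists_summable_bound_zOddTerm (hd : 0 ≤ d) (R : ℝ) :
    ∃ u : ℕ → ℝ, Summable u ∧
      ∀ s : ℂ, ‖s‖ ≤ R → ∀ m : ℕ, R + 1 ≤ m → ‖zOddTerm d s m‖ ≤ u m := by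
  have h1d : 0 < 1 + d := by linarith
  set ρ : ℝ := (d / (1 + d)) ^ 2
  set C : ℝ := (1 + d) ^ (2 + 2 * R) * ∑' n : ℕ, 1 / (n + (1 + d)) ^ (2 : ℝ)
  refine ⟨fun m => C * (Ring.choose (R + m - 1) m * ρ ^ m),
    (summable_choose_mul_div_one_add_sq_pow hd R).mul_left C, fun s hs m hm => ?_⟩
  have hre : (2 * s + 2 * m).re = 2 * s.re + 2 * m := by simp
  have hsre : -R ≤ s.re := (abs_le.mp ((Complex.abs_re_le_norm s).trans hs)).1
  have hH := norm_shiftedHurwitzZeta_le h1d (w := 2 * s + 2 * m) (by rw [hre]; linarith)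
  have hpow : (1 + d) ^ (2 - (2 * s + 2 * m).re) ≤ (1 + d) ^ (2 + 2 * R) / (1 + d) ^ (2 * m) := by
    rw [← Real.rpow_natCast, ← Real.rpow_sub h1d]
    exact Real.rpow_le_rpow_of_exponent_le (by linarith) (by rw [hre]; push_cast; linarith)
  have hchoose := Complex.norm_choose_add_sub_one_le hs m
  calc ‖zOddTerm d s m‖
      = ‖Ring.choose (s + m - 1) m‖ * d ^ (2 * m) *
          ‖shiftedHurwitzZeta (1 + d) (2 * s + 2 * m)‖ := by
        simp [zOddTerm, abs_of_nonneg hd]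
    _ ≤ Ring.choose (R + m - 1) m * d ^ (2 * m) *
          ((1 + d) ^ (2 + 2 * R) / (1 + d) ^ (2 * m) * ∑' n : ℕ, 1 / (n + (1 + d)) ^ (2 : ℝ)) := by
        refine mul_le_mul (mul_le_mul_of_nonneg_right hchoose (by positivity))
          (hH.trans (by gcongr)) (norm_nonneg _)
          (mul_nonneg ((norm_nonneg _).trans hchoose) (by positivity))
    _ = C * (Ring.choose (R + m - 1) m * ρ ^ m) := by
        simp only [C, ρ, ← pow_mul, div_pow]
        field_simp

lemma exists_zOddSeries_eventuallyEq_sum_add (hd : 0 ≤ d) (s₀ : ℂ) (N : ℕ) :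
    ∃ K ≥ N, ∃ T : ℂ → ℂ, DifferentiableAt ℂ T s₀ ∧
      ∀ᶠ s in 𝓝 s₀, zOddSeries d s = ∑ m ∈ range K, zOddTerm d s m + T s := by
  set R := ‖s₀‖ + 1
  obtain ⟨u, hu, hbound⟩ := exists_summable_bound_zOddTerm hd R
  set K := max N ⌈R + 1⌉₊
  have hball (s : ℂ) (hs : s ∈ Metric.ball s₀ 1) : ‖s‖ ≤ R := by
    have := norm_le_norm_add_norm_sub' s s₀
    rw [← dist_eq_norm] at this
    linarith [Metric.mem_ball.mp hs]
  have hK (j : ℕ) : R + 1 ≤ ((j + K : ℕ) : ℝ) := by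
    have := (Nat.le_ceil (R + 1)).trans (Nat.cast_le.mpr (le_max_right N _))
    push_cast
    linarith [j.cast_nonneg (α := ℝ)]
  have hu' : Summable fun j => u (j + K) := (summable_nat_add_iff K).mpr hu
  have htail : DifferentiableOn ℂ (fun s => ∑' j, zOddTerm d s (j + K)) (Metric.ball s₀ 1) :=
    Complex.differentiableOn_tsum_of_summable_norm hu'
      (fun j s hs => (differentiableAt_zOddTerm hd
        (ne_half_sub_natCast (hball s hs) (hK j))).differentiableWithinAt)
      Metric.isOpen_ball fun j s hs => hbound s (hball s hs) _ (hK j)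
  refine ⟨K, le_max_left _ _, _, htail.differentiableAt (Metric.ball_mem_nhds s₀ one_pos), ?_⟩
  filter_upwards [Metric.ball_mem_nhds s₀ one_pos] with s hs
  refine (Summable.sum_add_tsum_nat_add K ((summable_nat_add_iff K).mp ?_)).symm
  exact hu'.of_norm_bounded fun j => hbound s (hball s hs) _ (hK j)

theorem differentiableAt_zOddSeries (hd : 0 ≤ d) {s : ℂ} (hs : ∀ m : ℕ, s ≠ 1 / 2 - m) :
    DifferentiableAt ℂ (zOddSeries d) s := by
  obtain ⟨K, -, T, hT, hsum⟩ := exists_zOddSeries_eventuallyEq_sum_add hd s 0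
  refine DifferentiableAt.congr_of_eventuallyEq ?_ hsum
  exact (DifferentiableAt.fun_sum fun m _ => differentiableAt_zOddTerm hd (hs m)).add hT

lemma tendsto_sub_mul_zOddTerm (hd : 0 ≤ d) (m : ℕ) :
    Tendsto (fun s => (s - (1 / 2 - m)) * zOddTerm d s m) (𝓝[≠] (1 / 2 - m))
      (𝓝 (Ring.choose (-1 / 2 : ℂ) m * (d : ℂ) ^ (2 * m) / 2)) := by
  have hlin : Tendsto (fun s : ℂ => 2 * s + 2 * m) (𝓝[≠] (1 / 2 - m)) (𝓝[≠] 1) := by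
    refine tendsto_nhdsWithin_of_tendsto_nhds_of_eventually_within _ ?_
      (eventually_nhdsWithin_of_forall fun s hs => mt two_mul_add_natCast_eq_one_iff.mp hs)
    exact (Continuous.tendsto' (by fun_prop) _ _ (by ring)).mono_left nhdsWithin_le_nhds
  have hres := (shiftedHurwitzZeta_residue_one (x := 1 + d) (by linarith)).comp hlin
  have hcoef : Tendsto (fun s : ℂ => Ring.choose (s + m - 1) m * (d : ℂ) ^ (2 * m))
      (𝓝[≠] (1 / 2 - m)) (𝓝 (Ring.choose (-1 / 2 : ℂ) m * (d : ℂ) ^ (2 * m))) := by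
    refine (((differentiable_choose_add_sub_one m).continuous.tendsto' _ _ ?_).mul_const
      _).mono_left nhdsWithin_le_nhds
    congr 1
    ring
  convert (hcoef.mul hres).div_const 2 using 1
  · ext s
    simp only [zOddTerm, Function.comp_apply]
    ring
  · rw [mul_one]

theorem tendsto_sub_mul_zOddSeries (hd : 0 ≤ d) (m : ℕ) :
    Tendsto (fun s => (s - (1 / 2 - m)) * zOddSeries d s) (𝓝[≠] (1 / 2 - m))
      (𝓝 (Ring.choose (-1 / 2 : ℂ) m * (d : ℂ) ^ (2 * m) / 2)) := by
  obtain ⟨K, hK, T, hT, hsum⟩ := exists_zOddSeries_eventuallyEq_sum_add hd (1 / 2 - m) (m + 1)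
  have hregular : ContinuousAt
      (fun s => ∑ j ∈ (range K).erase m, zOddTerm d s j + T s) (1 / 2 - m) := by
    refine ((DifferentiableAt.fun_sum fun j hj => differentiableAt_zOddTerm hd fun h => ?_).add
      hT).continuousAt
    exact ne_of_mem_erase hj (by exact_mod_cast (sub_right_injective h).symm)
  refine (tendsto_sub_mul_add_of_continuousAt hregular (tendsto_sub_mul_zOddTerm hd m)).congr' ?_
  filter_upwards [nhdsWithin_le_nhds hsum] with s hs
  rw [hs, ← add_sum_erase _ _ (mem_range.mpr (show m < K by omega))]
  ring

lemma hasSum_zOddDoubleTerm_fst (hd : 0 ≤ d) (s : ℂ) (n : ℕ) :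
    HasSum (zOddDoubleTerm d s n) (1 / (((n + 1) * (n + 1 + 2 * d) : ℝ) : ℂ) ^ s) := by
  have hu : 1 + d ≤ n + (1 + d) := by simp
  have := hasSum_choose_mul_pow_div_cpow (u := n + (1 + d)) (d := d) (by linarith) (by nlinarith) s
  rwa [show (n + (1 + d)) ^ 2 - d ^ 2 = (n + 1) * (n + 1 + 2 * d) by ring] at this

lemma hasSum_zOddDoubleTerm_snd (hd : 0 ≤ d) {s : ℂ} (hs : 1 / 2 < s.re) (m : ℕ) :
    HasSum (fun n => zOddDoubleTerm d s n m) (zOddTerm d s m) := by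
  have := (hasSum_shiftedHurwitzZeta (x := 1 + d) (by linarith) (w := 2 * s + 2 * m)
    (by simp; linarith)).mul_left (Ring.choose (s + m - 1) m * (d : ℂ) ^ (2 * m))
  simp only [mul_one_div] at this
  exact this

lemma summable_uncurry_zOddDoubleTerm (hd : 0 ≤ d) {s : ℂ} (hs : 1 / 2 < s.re) :
    Summable (Function.uncurry (zOddDoubleTerm d s)) := by
  have hf : Summable fun n : ℕ => 1 / |(n : ℝ) + (1 + d)| ^ (2 * s.re) :=
    (Real.summable_one_div_nat_add_rpow _ _).mpr (by linarith)
  have hchoose (m : ℕ) := Complex.norm_choose_add_sub_one_le (le_refl ‖s‖) m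
  refine (hf.mul_of_nonneg (summable_choose_mul_div_one_add_sq_pow hd ‖s‖) (fun _ => by positivity)
    fun m => mul_nonneg ((norm_nonneg _).trans (hchoose m)) (by positivity)).of_norm_bounded ?_
  rintro ⟨n, m⟩
  have hre : (2 * s + 2 * m).re = 2 * s.re + 2 * m := by simp
  simp only [Function.uncurry_apply_pair, zOddDoubleTerm]
  set u : ℝ := n + (1 + d)
  have hu : 1 + d ≤ u := by simp [u]
  have hu0 : 0 < u := by linarith
  rw [abs_of_pos hu0]
  calc ‖Ring.choose (s + m - 1) m * (d : ℂ) ^ (2 * m) / (u : ℂ) ^ (2 * s + 2 * m)‖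
      = ‖Ring.choose (s + m - 1) m‖ * d ^ (2 * m) / (u ^ (2 * s.re) * u ^ (2 * m)) := by
        simp only [norm_div, norm_mul, norm_pow, Complex.norm_real,
          Real.norm_of_nonneg hd, Complex.norm_cpow_eq_rpow_re_of_pos hu0, hre, Real.rpow_add hu0]
        norm_cast
    _ = 1 / u ^ (2 * s.re) * (‖Ring.choose (s + m - 1) m‖ * ((d / u) ^ 2) ^ m) := by
        rw [div_pow, div_pow, ← pow_mul, ← pow_mul]
        ring
    _ ≤ 1 / u ^ (2 * s.re) * (Ring.choose (‖s‖ + m - 1) m * ((d / (1 + d)) ^ 2) ^ m) := by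
        gcongr
        · exact (norm_nonneg _).trans (hchoose m)
        · exact hchoose m

theorem hasSum_zOddSeries (hd : 0 ≤ d) {s : ℂ} (hs : 1 / 2 < s.re) :
    HasSum (fun n : ℕ => 1 / (((n + 1) * (n + 1 + 2 * d) : ℝ) : ℂ) ^ s) (zOddSeries d s) := by
  set F := Function.uncurry (zOddDoubleTerm d s)
  have hF : Summable F := summable_uncurry_zOddDoubleTerm hd hs
  rw [zOddSeries, (hF.prod_symm.hasSum.prod_fiberwise (hasSum_zOddDoubleTerm_snd hd hs)).tsum_eq]
  have hFsum : HasSum F (∑' p : ℕ × ℕ, F p.swap) :=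
    (Equiv.prodComm ℕ ℕ).hasSum_iff.mp hF.prod_symm.hasSum
  exact hFsum.prod_fiberwise (hasSum_zOddDoubleTerm_fst hd s)

end zOddSeries

lemma Complex.ofReal_sq_cpow_neg_half_sub_natCast {c : ℝ} (hc : 0 < c) (m : ℕ) :
    ((c ^ 2 : ℝ) : ℂ) ^ (-(1 / 2 - m : ℂ)) = ((c ^ (2 * m) / c : ℝ) : ℂ) := by
  have hexp : -(1 / 2 - m : ℂ) = ((m - 1 / 2 : ℝ) : ℂ) := by push_cast; ring
  rw [hexp, ← Complex.ofReal_cpow (by positivity), ← Real.rpow_natCast_mul hc.le,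
    show ((2 : ℕ) : ℝ) * (m - 1 / 2) = (2 * m : ℕ) - 1 by push_cast; ring,
    Real.rpow_sub hc, Real.rpow_natCast, Real.rpow_one]

/-- Lemma 5, pole part: `z_odd(s,0,b,c)` extends analytically to the complement
of `{1/2 - m : m ∈ ℕ}` with simple poles at `s = 1/2 - m` and the stated residua. -/
theorem z_odd_continuation (b c : ℝ) (hb : 0 < b) (hc : 0 < c) :
    ∃ Z : ℂ → ℂ,
      DifferentiableOn ℂ Z {s : ℂ | ∀ m : ℕ, s ≠ 1 / 2 - (m : ℂ)} ∧
      (∀ s : ℂ, 1 / 2 < s.re →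
        Z s = ∑' n : ℕ,
          1 / ((c * (n + 1) * (c * (n + 1) + b) : ℝ) : ℂ) ^ s) ∧
      ∀ m : ℕ,
        Tendsto (fun s : ℂ => (s - (1 / 2 - (m : ℂ))) * Z s)
          (nhdsWithin (1 / 2 - (m : ℂ)) {(1 / 2 - (m : ℂ))}ᶜ)
          (nhds ((((-1 : ℝ) ^ m / 2 ^ (m + 1)) *
            ((Nat.doubleFactorial (2 * m - 1) : ℝ) / (Nat.factorial m : ℝ)) * (1 / c) * (b / 2) ^ (2 * m) : ℝ) : ℂ)) := by
  set d := b / (2 * c)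
  have hd : 0 ≤ d := by positivity
  have hbd : b = 2 * c * d := (mul_div_cancel₀ b (by positivity)).symm
  have hc2 : ((c ^ 2 : ℝ) : ℂ) ≠ 0 := by exact_mod_cast (by positivity : c ^ 2 ≠ 0)
  have hscale : Differentiable ℂ fun s : ℂ => ((c ^ 2 : ℝ) : ℂ) ^ (-s) :=
    fun s => differentiableAt_id.neg.const_cpow (Or.inl hc2)
  refine ⟨fun s => ((c ^ 2 : ℝ) : ℂ) ^ (-s) * zOddSeries d s, fun s hs => ?_, fun s hs => ?_,
    fun m => ?_⟩
  · exact ((hscale s).mul (differentiableAt_zOddSeries hd hs)).differentiableWithinAt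
  · beta_reduce
    rw [← (hasSum_zOddSeries hd hs).tsum_eq, ← tsum_mul_left]
    congr 1 with n
    rw [show ((c * (n + 1) * (c * (n + 1) + b) : ℝ) : ℂ) =
        ((c ^ 2 : ℝ) : ℂ) * (((n + 1) * (n + 1 + 2 * d) : ℝ) : ℂ) by rw [hbd]; push_cast; ring,
      Complex.mul_cpow_ofReal_nonneg (by positivity) (by positivity), Complex.cpow_neg]
    ring
  · convert ((hscale _).continuousAt.tendsto.mono_left nhdsWithin_le_nhds).mul
      (tendsto_sub_mul_zOddSeries hd m) using 1
    · ext s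
      ring
    · congr 1
      rw [Complex.ofReal_sq_cpow_neg_half_sub_natCast hc, Ring.choose_neg_half, hbd]
      push_cast
      field_simp
      ring
end

section
/- For every integer k ≥ 1 there exist unique real numbers a_{k,0}, a_{k,1}, …, a_{k,k−1} such that ∏_{i=1}^{k−1}(x+i)² = Σ_{l=0}^{k−1} a_{k,l}·(x²+kx)^l holds as an identity of polynomials in x. Moreover a_{k,k−1} = 1 and a_{k,0} = ((k−1)!)². -/
/-! Pairing the factor `x + i` with `x + (k - i)` gives
`(x + i)(x + k - i) = (x² + kx) + i(k - i)`, so the product is `P(x² + kx)` for the monic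
`P = ∏ (y + i(k - i))` of degree `k - 1`, whose constant term is `∏ i(k - i) = ((k-1)!)²`.
The coefficients are unique because composition with the nonconstant `x² + kx` is injective. -/

open Polynomial Finset Nat

theorem Finset.prod_Icc_one_reflect {M : Type*} [CommMonoid M] (f : ℕ → M) (n : ℕ) :
    ∏ i ∈ Icc 1 n, f (n + 1 - i) = ∏ i ∈ Icc 1 n, f i := by
  simpa [← Ico_add_one_right_eq_Icc] using
    prod_Ico_reflect f 1 (n := n + 1) (m := n + 1) (by omega)

theorem Finset.prod_Icc_mul_sub_eq_factorial_sq (n : ℕ) :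
    ∏ i ∈ Icc 1 n, i * (n + 1 - i) = n ! ^ 2 := by
  rw [prod_mul_distrib, prod_Icc_one_reflect (fun i => i), ← Ico_add_one_right_eq_Icc,
    prod_Ico_id_eq_factorial, sq]

namespace Polynomial

section Semiring

variable {R : Type*} [Semiring R]

theorem coeff_sum_range_C_mul_X_pow (a : ℕ → R) {n l : ℕ} (hl : l < n) :
    (∑ i ∈ range n, C (a i) * X ^ i).coeff l = a l := by
  simp [hl]

theorem sum_range_C_mul_pow_eq_comp (a : ℕ → R) (n : ℕ) (q : R[X]) :
    ∑ i ∈ range n, C (a i) * q ^ i = (∑ i ∈ range n, C (a i) * X ^ i).comp q := by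
  simp [sum_comp]

theorem comp_eq_sum_range_C_mul_pow (p q : R[X]) {n : ℕ} (hn : p.natDegree < n) :
    p.comp q = ∑ i ∈ range n, C (p.coeff i) * q ^ i := by
  rw [sum_range_C_mul_pow_eq_comp, ← as_sum_range_C_mul_X_pow' p hn]

end Semiring

section NoZeroDivisors

variable {R : Type*} [Ring R] [NoZeroDivisors R]

theorem comp_left_injective {q : R[X]} (hq : q.natDegree ≠ 0) :
    Function.Injective fun p : R[X] => p.comp q := by
  intro p p' h
  have : (p - p').comp q = 0 := by simpa [sub_comp, sub_eq_zero] using h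
  rcases comp_eq_zero_iff.mp this with h0 | ⟨-, hC⟩
  · exact sub_eq_zero.mp h0
  · exact absurd (congrArg natDegree hC) (by simpa using hq)

theorem eq_of_sum_range_C_mul_pow_eq {q : R[X]} (hq : q.natDegree ≠ 0) {n : ℕ} {a b : ℕ → R}
    (h : ∑ i ∈ range n, C (a i) * q ^ i = ∑ i ∈ range n, C (b i) * q ^ i) {l : ℕ}
    (hl : l < n) :
    a l = b l := by
  rw [sum_range_C_mul_pow_eq_comp a, sum_range_C_mul_pow_eq_comp b] at h
  simpa [coeff_sum_range_C_mul_X_pow _ hl] using congrArg (coeff · l) (comp_left_injective hq h)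

end NoZeroDivisors

section aPoly

variable {R : Type*} [CommRing R]

/-- The coefficients `a_{n+1,l}` are the coefficients of this polynomial. -/
noncomputable def aPoly (n : ℕ) : R[X] :=
  ∏ i ∈ Icc 1 n, (X + C ((i * (n + 1 - i) : ℕ) : R))

theorem monic_aPoly (n : ℕ) : (aPoly n : R[X]).Monic :=
  monic_prod_of_monic _ _ fun _ _ => monic_X_add_C _

theorem natDegree_aPoly [Nontrivial R] (n : ℕ) : (aPoly n : R[X]).natDegree = n := by
  rw [aPoly, natDegree_prod_of_monic _ _ fun _ _ => monic_X_add_C _]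
  simp only [natDegree_X_add_C, sum_const, Nat.card_Icc, smul_eq_mul, mul_one]
  omega

theorem coeff_aPoly_zero (n : ℕ) : (aPoly n : R[X]).coeff 0 = ((n ! ^ 2 : ℕ) : R) := by
  rw [coeff_zero_eq_eval_zero, aPoly, eval_prod, ← prod_Icc_mul_sub_eq_factorial_sq]
  simp

theorem X_add_C_mul_X_add_C_reflect {n i : ℕ} (hi : i ≤ n + 1) :
    (X + C (i : R)) * (X + C ((n + 1 - i : ℕ) : R)) =
      X ^ 2 + C ((n + 1 : ℕ) : R) * X + C ((i * (n + 1 - i) : ℕ) : R) := by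
  push_cast [Nat.cast_sub hi]
  simp only [C_add, C_mul, C_sub, C_1]
  ring

theorem aPoly_comp (n : ℕ) :
    (aPoly n : R[X]).comp (X ^ 2 + C ((n + 1 : ℕ) : R) * X) =
      ∏ i ∈ Icc 1 n, (X + C (i : R)) ^ 2 := by
  calc (aPoly n : R[X]).comp (X ^ 2 + C ((n + 1 : ℕ) : R) * X)
      = ∏ i ∈ Icc 1 n, (X + C (i : R)) * (X + C ((n + 1 - i : ℕ) : R)) := by
        rw [aPoly, prod_comp]
        refine prod_congr rfl fun i hi => ?_
        rw [X_add_C_mul_X_add_C_reflect (by simp at hi; omega)]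
        simp
    _ = ∏ i ∈ Icc 1 n, (X + C (i : R)) ^ 2 := by
        rw [prod_mul_distrib, prod_Icc_one_reflect (fun i => X + C (i : R)), ← prod_mul_distrib]
        simp only [sq]

end aPoly

end Polynomial

/-- Definition 2: existence and uniqueness of the coefficients `a_{k,l}`,
together with `a_{k,k-1} = 1` and `a_{k,0} = ((k-1)!)²`. -/
theorem a_coeffs (k : ℕ) (hk : 1 ≤ k) :
    (∃ a : ℕ → ℝ,
        (∏ i ∈ Finset.Icc 1 (k - 1), (X + C (i : ℝ)) ^ 2) =
          ∑ l ∈ Finset.range k, C (a l) * (X ^ 2 + C ((k : ℕ) : ℝ) * X) ^ l ∧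
        a (k - 1) = 1 ∧ a 0 = ((Nat.factorial (k - 1) : ℝ)) ^ 2) ∧
      ∀ a a' : ℕ → ℝ,
        (∏ i ∈ Finset.Icc 1 (k - 1), (X + C (i : ℝ)) ^ 2) =
            ∑ l ∈ Finset.range k, C (a l) * (X ^ 2 + C ((k : ℕ) : ℝ) * X) ^ l →
        (∏ i ∈ Finset.Icc 1 (k - 1), (X + C (i : ℝ)) ^ 2) =
            ∑ l ∈ Finset.range k, C (a' l) * (X ^ 2 + C ((k : ℕ) : ℝ) * X) ^ l →
        ∀ l < k, a l = a' l := by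
  obtain ⟨n, rfl⟩ : ∃ n, k = n + 1 := ⟨k - 1, by omega⟩
  simp only [Nat.add_sub_cancel]
  have hq : (X ^ 2 + C ((n + 1 : ℕ) : ℝ) * X).natDegree = 2 := by compute_degree!
  refine ⟨⟨fun l => (aPoly n).coeff l, ?_, ?_, ?_⟩, fun a a' ha ha' l hl => ?_⟩
  · have hdeg : (aPoly n : ℝ[X]).natDegree < n + 1 := by rw [natDegree_aPoly]; omega
    rw [← aPoly_comp, comp_eq_sum_range_C_mul_pow _ _ hdeg]
  · simpa [natDegree_aPoly] using (monic_aPoly n : (aPoly n : ℝ[X]).Monic).coeff_natDegree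
  · simp [coeff_aPoly_zero]
  · exact eq_of_sum_range_C_mul_pow_eq (by rw [hq]; exact two_ne_zero) (ha.symm.trans ha') hl
end

section
/- Let k ≥ 2 be an integer and let s be a complex number with Re(s) > k. Then ζ(s, ℂP^k) = 4^{−s} · (k/((k−1)!)²) · Σ_{l=0}^{k−1} a_{k,l} · z_even(s−l, 0, k, 1), where both sides are given by absolutely convergent series. -/
/-!
Evaluating the polynomial identity `∏ (x + i)² = ∑ a_l (x² + kx)^l` at `x = n` turns each term of
`ζ(s, ℂP^k)` into a finite combination of terms `(2n + k) (n(n + k))^l / (n(n + k))^s`, i.e. of terms of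
`z_even(s - l, 0, k, 1)`. Since `n(n + k) ≥ n²`, these series are dominated by `∑ n^(1 - 2 Re(s - l))`,
which converges for `l < k < Re s`; so the finite sum may be exchanged with the infinite one.
-/

open Polynomial

/-- The `(n+1)`-st term of `z_even(t, 0, b, 1)`. -/
noncomputable def zEvenTerm (b : ℝ) (t : ℂ) (n : ℕ) : ℂ :=
  ((2 * ((n : ℝ) + 1) + b : ℝ) : ℂ) / ((((n : ℝ) + 1) * ((n : ℝ) + 1 + b) : ℝ) : ℂ) ^ t

/-- The `(n+1)`-st term of `4^s ζ(s, ℂP^k)`. -/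
noncomputable def cpTerm (k : ℕ) (s : ℂ) (n : ℕ) : ℂ :=
  (((k : ℝ) * (2 * ((n : ℝ) + 1) + k) / (Nat.factorial (k - 1) : ℝ) ^ 2 *
      ∏ i ∈ Finset.Icc 1 (k - 1), ((n : ℝ) + 1 + i) ^ 2 : ℝ) : ℂ) /
    ((((n : ℝ) + 1) * ((n : ℝ) + 1 + k) : ℝ) : ℂ) ^ s

section zEven

variable {b : ℝ} {t : ℂ}

theorem norm_zEvenTerm_le (hb : 0 ≤ b) (ht : 0 ≤ t.re) (n : ℕ) :
    ‖zEvenTerm b t n‖ ≤ (b + 2) * ((n : ℝ) + 1) ^ (1 - 2 * t.re) := by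
  have hn : (1 : ℝ) ≤ n + 1 := by simp
  have hw : ((n : ℝ) + 1) ^ 2 ≤ (n + 1) * (n + 1 + b) := by nlinarith
  have hnorm : ‖zEvenTerm b t n‖ = (2 * ((n : ℝ) + 1) + b) / ((n + 1) * (n + 1 + b)) ^ t.re := by
    rw [zEvenTerm, norm_div, Complex.norm_real, Complex.norm_cpow_eq_rpow_re_of_pos (by positivity),
      Real.norm_of_nonneg (by positivity)]
  have hden : ((n : ℝ) + 1) ^ (2 * t.re) ≤ ((n + 1) * (n + 1 + b)) ^ t.re := by
    rw [Real.rpow_mul (by positivity), Real.rpow_two]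
    exact Real.rpow_le_rpow (by positivity) hw ht
  calc ‖zEvenTerm b t n‖
      ≤ (b + 2) * ((n : ℝ) + 1) / ((n : ℝ) + 1) ^ (2 * t.re) := by
        rw [hnorm]
        exact div_le_div₀ (by positivity) (by nlinarith) (by positivity) hden
    _ = (b + 2) * ((n : ℝ) + 1) ^ (1 - 2 * t.re) := by
        rw [Real.rpow_sub (by positivity), Real.rpow_one, mul_div_assoc]

theorem summable_zEvenTerm (hb : 0 ≤ b) (ht : 1 < t.re) : Summable (zEvenTerm b t) := by
  have hp : Summable fun n : ℕ => ((n : ℝ) + 1) ^ (1 - 2 * t.re) := by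
    simpa using (summable_nat_add_iff 1).2 (Real.summable_nat_rpow.2 (by linarith))
  exact .of_norm_bounded (hp.mul_left (b + 2)) (norm_zEvenTerm_le hb (by linarith))

theorem zEvenTerm_sub_natCast (hb : 0 ≤ b) (s : ℂ) (l n : ℕ) :
    zEvenTerm b (s - l) n =
      ((2 * ((n : ℝ) + 1) + b : ℝ) : ℂ) * ((((n : ℝ) + 1) * ((n : ℝ) + 1 + b) : ℝ) : ℂ) ^ l /
        ((((n : ℝ) + 1) * ((n : ℝ) + 1 + b) : ℝ) : ℂ) ^ s := by
  have hw : ((((n : ℝ) + 1) * ((n : ℝ) + 1 + b) : ℝ) : ℂ) ≠ 0 := by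
    exact_mod_cast (show (0 : ℝ) < (n + 1) * (n + 1 + b) by positivity).ne'
  rw [zEvenTerm, Complex.cpow_sub _ _ hw, Complex.cpow_natCast, div_div_eq_mul_div]

end zEven

theorem cpTerm_eq_sum_zEvenTerm {k : ℕ} {a : ℕ → ℝ}
    (ha : (∏ i ∈ Finset.Icc 1 (k - 1), (X + C (i : ℝ)) ^ 2) =
      ∑ l ∈ Finset.range k, C (a l) * (X ^ 2 + C (k : ℝ) * X) ^ l) (s : ℂ) (n : ℕ) :
    cpTerm k s n = (k : ℂ) / (Nat.factorial (k - 1) : ℂ) ^ 2 *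
      ∑ l ∈ Finset.range k, (a l : ℂ) * zEvenTerm k (s - l) n := by
  have hprod : ∏ i ∈ Finset.Icc 1 (k - 1), ((n : ℝ) + 1 + i) ^ 2 =
      ∑ l ∈ Finset.range k, a l * (((n : ℝ) + 1) * ((n : ℝ) + 1 + k)) ^ l := by
    have h := congrArg (eval ((n : ℝ) + 1)) ha
    simp only [eval_prod, eval_finsetSum, eval_pow, eval_add, eval_mul, eval_X, eval_C] at h
    rw [h]
    exact Finset.sum_congr rfl fun l _ => by ring
  simp only [cpTerm, hprod, zEvenTerm_sub_natCast (Nat.cast_nonneg k)]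
  push_cast
  simp only [Finset.mul_sum, Finset.sum_div]
  exact Finset.sum_congr rfl fun l _ => by ring

theorem zeta_CPk_decomposition_general (k : ℕ) (a : ℕ → ℝ)
    (ha : (∏ i ∈ Finset.Icc 1 (k - 1), (X + C (i : ℝ)) ^ 2) =
      ∑ l ∈ Finset.range k, C (a l) * (X ^ 2 + C ((k : ℕ) : ℝ) * X) ^ l)
    (s : ℂ) (hs : (k : ℝ) < s.re) :
    Summable (fun n : ℕ =>
        (((k : ℝ) * (2 * ((n : ℝ) + 1) + k) / (Nat.factorial (k - 1) : ℝ) ^ 2 *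
            ∏ i ∈ Finset.Icc 1 (k - 1), ((n : ℝ) + 1 + i) ^ 2 : ℝ) : ℂ) /
          ((((n : ℝ) + 1) * ((n : ℝ) + 1 + k) : ℝ) : ℂ) ^ s) ∧
      (∀ l < k, Summable (fun n : ℕ =>
        ((2 * ((n : ℝ) + 1) + (k : ℝ) : ℝ) : ℂ) /
          ((((n : ℝ) + 1) * ((n : ℝ) + 1 + k) : ℝ) : ℂ) ^ (s - l))) ∧
      (4 : ℂ) ^ (-s) * (∑' n : ℕ,
          (((k : ℝ) * (2 * ((n : ℝ) + 1) + k) / (Nat.factorial (k - 1) : ℝ) ^ 2 *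
              ∏ i ∈ Finset.Icc 1 (k - 1), ((n : ℝ) + 1 + i) ^ 2 : ℝ) : ℂ) /
            ((((n : ℝ) + 1) * ((n : ℝ) + 1 + k) : ℝ) : ℂ) ^ s) =
        (4 : ℂ) ^ (-s) * ((k : ℂ) / (Nat.factorial (k - 1) : ℂ) ^ 2) *
          ∑ l ∈ Finset.range k, (a l : ℂ) *
            ∑' n : ℕ,
              ((2 * ((n : ℝ) + 1) + (k : ℝ) : ℝ) : ℂ) /
                ((((n : ℝ) + 1) * ((n : ℝ) + 1 + k) : ℝ) : ℂ) ^ (s - l) := by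
  have hz : ∀ l ∈ Finset.range k, Summable (zEvenTerm k (s - l)) := fun l hl => by
    have hl : (l : ℝ) + 1 ≤ k := by exact_mod_cast Finset.mem_range.1 hl
    refine summable_zEvenTerm (Nat.cast_nonneg k) ?_
    rw [Complex.sub_re, Complex.natCast_re]
    linarith
  have hza : ∀ l ∈ Finset.range k, Summable fun n => (a l : ℂ) * zEvenTerm k (s - l) n :=
    fun l hl => (hz l hl).mul_left _
  have hsum : cpTerm k s = fun n => (k : ℂ) / (Nat.factorial (k - 1) : ℂ) ^ 2 *
      ∑ l ∈ Finset.range k, (a l : ℂ) * zEvenTerm k (s - l) n :=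
    funext (cpTerm_eq_sum_zEvenTerm ha s)
  refine ⟨?_, fun l hl => hz l (Finset.mem_range.2 hl), ?_⟩
  · change Summable (cpTerm k s)
    exact hsum ▸ (summable_sum hza).mul_left _
  · change _ * ∑' n, cpTerm k s n =
      _ * ∑ l ∈ Finset.range k, (a l : ℂ) * ∑' n, zEvenTerm k (s - l) n
    rw [hsum, tsum_mul_left, Summable.tsum_finsetSum hza, mul_assoc]
    simp only [tsum_mul_left]

/-- Lemma 6: decomposition of `ζ(s,ℂP^k)` in terms of `z_even(s-l,0,k,1)`. -/
theorem zeta_CPk_decomposition (k : ℕ) (hk : 2 ≤ k) (a : ℕ → ℝ)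
    (ha : (∏ i ∈ Finset.Icc 1 (k - 1), (X + C (i : ℝ)) ^ 2) =
      ∑ l ∈ Finset.range k, C (a l) * (X ^ 2 + C ((k : ℕ) : ℝ) * X) ^ l)
    (s : ℂ) (hs : (k : ℝ) < s.re) :
    Summable (fun n : ℕ =>
        (((k : ℝ) * (2 * ((n : ℝ) + 1) + k) / (Nat.factorial (k - 1) : ℝ) ^ 2 *
            ∏ i ∈ Finset.Icc 1 (k - 1), ((n : ℝ) + 1 + i) ^ 2 : ℝ) : ℂ) /
          ((((n : ℝ) + 1) * ((n : ℝ) + 1 + k) : ℝ) : ℂ) ^ s) ∧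
      (∀ l < k, Summable (fun n : ℕ =>
        ((2 * ((n : ℝ) + 1) + (k : ℝ) : ℝ) : ℂ) /
          ((((n : ℝ) + 1) * ((n : ℝ) + 1 + k) : ℝ) : ℂ) ^ (s - l))) ∧
      (4 : ℂ) ^ (-s) * (∑' n : ℕ,
          (((k : ℝ) * (2 * ((n : ℝ) + 1) + k) / (Nat.factorial (k - 1) : ℝ) ^ 2 *
              ∏ i ∈ Finset.Icc 1 (k - 1), ((n : ℝ) + 1 + i) ^ 2 : ℝ) : ℂ) /
            ((((n : ℝ) + 1) * ((n : ℝ) + 1 + k) : ℝ) : ℂ) ^ s) =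
        (4 : ℂ) ^ (-s) * ((k : ℂ) / (Nat.factorial (k - 1) : ℂ) ^ 2) *
          ∑ l ∈ Finset.range k, (a l : ℂ) *
            ∑' n : ℕ,
              ((2 * ((n : ℝ) + 1) + (k : ℝ) : ℝ) : ℂ) /
                ((((n : ℝ) + 1) * ((n : ℝ) + 1 + k) : ℝ) : ℂ) ^ (s - l) :=
  zeta_CPk_decomposition_general k a ha s hs
end

section
/- Let k ≥ 2 be an integer. There exists a function Z : ℂ → ℂ, complex analytic on ℂ ∖ {1, 2, …, k}, such that Z(s) = ζ(s, ℂP^k) (the convergent series) for all s with Re(s) > k, and for every integer n with 1 ≤ n ≤ k, Z has a simple pole at s = n with lim_{s→n} (s−n)·Z(s) = 4^{−n} · k · a_{k,n−1} / ((k−1)!)². -/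
/-!
Evaluating the hypothesis on `a` at `x = n + 1` turns the `n`-th term of the series into
`4^{-s} k/((k-1)!)² ∑_l a_l (2x+k) (x(x+k))^{-(s-l)}`, so everything reduces to the Dirichlet
series `F(s) = ∑_{x ≥ 1} (2x+k) (x(x+k))^{-s}`. Writing `(x(x+k))^{-s} = x^{-2s} (1+k/x)^{-s}` and
expanding `(1+k/x)^{-s}` binomially, with a remainder that is `O(x^{-J})` locally uniformly in `s`,
expresses `F` as a finite combination of `ζ(2s+j-1)` and `ζ(2s+j)` plus a series that is
holomorphic for `Re s > 1 - J/2`. All poles of these zeta values cancel except the one of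
`2ζ(2s-1)` at `s = 1`, so `F` is holomorphic on `ℂ ∖ {1}` with residue `1` there, and
`4^{-s} k/((k-1)!)² ∑_l a_l F(s-l)` has at `s = n` only the pole coming from `l = n - 1`.
-/

open Polynomial Filter Topology

namespace CPkZeta

open Complex Finset

noncomputable section

section Choose

variable {R : Type*} [NonAssocRing R] [Pow R ℕ] [NatPowAssoc R] [BinomialRing R]

theorem succ_nsmul_choose_succ_eq_choose_mul_sub (r : R) (m : ℕ) :
    (m + 1) • Ring.choose r (m + 1) = Ring.choose r m * (r - m) := by
  have h := Ring.choose_smul_choose r (Nat.le_add_right m 1)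
  rwa [Nat.choose_succ_self_right, Nat.add_sub_cancel_left, Ring.choose_one_right] at h

theorem succ_nsmul_choose_succ_eq_mul_choose_sub_one (r : R) (m : ℕ) :
    (m + 1) • Ring.choose r (m + 1) = r * Ring.choose (r - 1) m := by
  have h := Ring.choose_smul_choose r (Nat.le_add_left 1 m)
  rwa [Nat.choose_one_right, Nat.add_sub_cancel, Ring.choose_one_right, Nat.cast_one] at h

end Choose

theorem differentiable_choose (j : ℕ) : Differentiable ℂ fun w : ℂ => Ring.choose w j := by
  simp_rw [Ring.choose_eq_smul, ← aeval_eq_smeval, smul_eq_mul]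
  exact (Polynomial.differentiable_aeval _).const_mul _

def binomRemainder (J : ℕ) (s z : ℂ) : ℂ :=
  (1 + z) ^ (-s) - ∑ j ∈ range J, Ring.choose (-s) j * z ^ j

theorem binomRemainder_succ_zero (J : ℕ) (s : ℂ) : binomRemainder (J + 1) s 0 = 0 := by
  simp [binomRemainder, sum_range_succ']

theorem binomRemainder_sub_succ (J : ℕ) (s z : ℂ) :
    binomRemainder J s z - binomRemainder (J + 1) s z = Ring.choose (-s) J * z ^ J := by
  simp [binomRemainder, sum_range_succ]

theorem differentiable_binomRemainder (J : ℕ) {z : ℂ} (hz : 1 + z ≠ 0) :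
    Differentiable ℂ fun s => binomRemainder J s z :=
  (differentiable_neg.const_cpow (.inl hz)).sub <| Differentiable.fun_sum fun j _ =>
    ((differentiable_choose j).comp differentiable_neg).mul_const _

theorem hasDerivAt_binomRemainder (J : ℕ) (s : ℂ) {z : ℂ} (hz : 1 + z ∈ slitPlane) :
    HasDerivAt (binomRemainder (J + 1) s) (-s * binomRemainder J (s + 1) z) z := by
  have hpow : HasDerivAt (fun z : ℂ => (1 + z) ^ (-s)) (-s * (1 + z) ^ (-(s + 1))) z := by
    simpa [sub_eq_add_neg, add_comm] using ((hasDerivAt_id z).const_add 1).cpow_const (c := -s) hz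
  have hsum : HasDerivAt (fun z : ℂ => ∑ j ∈ range (J + 1), Ring.choose (-s) j * z ^ j)
      (∑ j ∈ range J, -s * Ring.choose (-(s + 1)) j * z ^ j) z := by
    refine (HasDerivAt.fun_sum fun j _ =>
      (hasDerivAt_pow j z).const_mul (Ring.choose (-s) j)).congr_deriv ?_
    rw [sum_range_succ']
    simp only [Nat.cast_zero, zero_mul, mul_zero, add_zero, Nat.add_sub_cancel]
    refine sum_congr rfl fun j _ => ?_
    have h := succ_nsmul_choose_succ_eq_mul_choose_sub_one (-s) j
    rw [nsmul_eq_mul, ← neg_add'] at h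
    linear_combination z ^ j * h
  refine (hpow.sub hsum).congr_deriv ?_
  simp only [binomRemainder, mul_sub, mul_sum, mul_assoc]

theorem one_add_ofReal_mem_slitPlane {t : ℝ} (ht : 0 ≤ t) : 1 + (t : ℂ) ∈ slitPlane := by
  rw [← ofReal_one, ← ofReal_add, ofReal_mem_slitPlane]
  linarith

theorem continuousOn_binomRemainder_ofReal (J : ℕ) (s : ℂ) :
    ContinuousOn (fun t : ℝ => binomRemainder J s t) (Set.Ici 0) :=
  (ContinuousOn.cpow_const (by fun_prop) fun _ ht => one_add_ofReal_mem_slitPlane ht).sub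
    (by fun_prop)

theorem binomRemainder_succ_eq_integral (J : ℕ) (s : ℂ) {x : ℝ} (hx : 0 ≤ x) :
    binomRemainder (J + 1) s x = -s * ∫ t in (0 : ℝ)..x, binomRemainder J (s + 1) t := by
  have hderiv : ∀ t ∈ Set.uIcc 0 x, HasDerivAt (fun t : ℝ => binomRemainder (J + 1) s t)
      (-s * binomRemainder J (s + 1) t) t := fun t ht => by
    rw [Set.uIcc_of_le hx] at ht
    exact (hasDerivAt_binomRemainder J s (one_add_ofReal_mem_slitPlane ht.1)).comp_ofReal
  have hint : IntervalIntegrable (fun t : ℝ => -s * binomRemainder J (s + 1) t)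
      MeasureTheory.volume 0 x := by
    refine (continuousOn_const.mul ((continuousOn_binomRemainder_ofReal J (s + 1)).mono ?_))
      |>.intervalIntegrable
    rw [Set.uIcc_of_le hx]
    exact Set.Icc_subset_Ici_self
  rw [← intervalIntegral.integral_const_mul,
    intervalIntegral.integral_eq_sub_of_hasDerivAt hderiv hint, ofReal_zero,
    binomRemainder_succ_zero, sub_zero]

theorem exists_norm_binomRemainder_le (J : ℕ) (R X : ℝ) : ∃ C, 0 ≤ C ∧
    ∀ s : ℂ, ‖s‖ ≤ R → ∀ x ∈ Set.Icc 0 X, ‖binomRemainder J s x‖ ≤ C * x ^ J := by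
  induction J generalizing R with
  | zero =>
    refine ⟨(1 + |X|) ^ R, by positivity, fun s hs x hx => ?_⟩
    have hR : 0 ≤ R := (norm_nonneg s).trans hs
    have hre : -s.re ≤ R := (neg_le_abs s.re).trans ((abs_re_le_norm s).trans hs)
    rw [binomRemainder, range_zero, sum_empty, sub_zero, pow_zero, mul_one, ← ofReal_one,
      ← ofReal_add, norm_cpow_eq_rpow_re_of_pos (by linarith [hx.1]), neg_re]
    calc (1 + x) ^ (-s.re) ≤ (1 + x) ^ R :=
          Real.rpow_le_rpow_of_exponent_le (by linarith [hx.1]) hre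
      _ ≤ (1 + |X|) ^ R :=
          Real.rpow_le_rpow (by linarith [hx.1]) (by linarith [hx.2, le_abs_self X]) hR
  | succ J ih =>
    obtain ⟨C, hC0, hC⟩ := ih (R + 1)
    refine ⟨|R| * C, by positivity, fun s hs x hx => ?_⟩
    have hint : ‖∫ t in (0 : ℝ)..x, binomRemainder J (s + 1) t‖ ≤ C * x ^ J * |x - 0| := by
      refine intervalIntegral.norm_integral_le_of_norm_le_const fun t ht => ?_
      rw [Set.uIoc_of_le hx.1] at ht
      calc ‖binomRemainder J (s + 1) t‖ ≤ C * t ^ J :=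
            hC (s + 1) ((norm_add_le s 1).trans (by simpa using hs))
              t ⟨ht.1.le, ht.2.trans hx.2⟩
        _ ≤ C * x ^ J := by gcongr; exacts [ht.1.le, ht.2]
    rw [sub_zero, abs_of_nonneg hx.1] at hint
    calc ‖binomRemainder (J + 1) s x‖
        = ‖s‖ * ‖∫ t in (0 : ℝ)..x, binomRemainder J (s + 1) t‖ := by
          rw [binomRemainder_succ_eq_integral J s hx.1, norm_mul, norm_neg]
      _ ≤ |R| * (C * x ^ J * x) := by gcongr; exact hs.trans (le_abs_self R)
      _ = |R| * C * x ^ (J + 1) := by ring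

def remainderTerm (k J : ℕ) (s : ℂ) (b : ℝ) : ℂ :=
  (2 * b + k : ℝ) * (b : ℂ) ^ (-2 * s) * binomRemainder J s (k / b : ℝ)

theorem remainderTerm_zero (k : ℕ) (s : ℂ) {b : ℝ} (hb : 0 < b) :
    remainderTerm k 0 s b = (2 * b + k : ℝ) * ((b * (b + k) : ℝ) : ℂ) ^ (-s) := by
  have hsplit : b * (b + k) = b * (b * (1 + k / b)) := by field_simp
  rw [remainderTerm, binomRemainder, range_zero, sum_empty, sub_zero, hsplit, ofReal_mul,
    mul_cpow_ofReal_nonneg hb.le (by positivity), ofReal_mul,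
    mul_cpow_ofReal_nonneg hb.le (by positivity), show -2 * s = -s + -s by ring,
    cpow_add _ _ (ofReal_ne_zero.2 hb.ne')]
  push_cast
  ring

theorem remainderTerm_sub_succ (k J : ℕ) (s : ℂ) {b : ℝ} (hb : b ≠ 0) :
    remainderTerm k J s b - remainderTerm k (J + 1) s b = Ring.choose (-s) J * (k : ℂ) ^ J *
      (2 * (b : ℂ) ^ (-(2 * s + J - 1)) + k * (b : ℂ) ^ (-(2 * s + J))) := by
  have hB : (b : ℂ) ≠ 0 := ofReal_ne_zero.2 hb
  rw [remainderTerm, remainderTerm, ← mul_sub, binomRemainder_sub_succ,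
    show -(2 * s + J - 1) = 1 + -2 * s + -J by ring, show -(2 * s + J) = -2 * s + -J by ring,
    cpow_add _ _ hB, cpow_add _ _ hB, cpow_add _ _ hB, cpow_one, cpow_neg, cpow_natCast]
  push_cast
  rw [div_pow]
  field_simp

theorem differentiable_remainderTerm (k J : ℕ) {b : ℝ} (hb : 0 < b) :
    Differentiable ℂ fun s => remainderTerm k J s b := by
  have h1 : 1 + ((k / b : ℝ) : ℂ) ≠ 0 :=
    slitPlane_ne_zero (one_add_ofReal_mem_slitPlane (by positivity))
  exact ((differentiable_const _).mul ((differentiable_id.const_mul _).const_cpow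
    (.inl (ofReal_ne_zero.2 hb.ne')))).mul (differentiable_binomRemainder J h1)

theorem exists_norm_remainderTerm_le (k J : ℕ) (R σ : ℝ) : ∃ C, ∀ s : ℂ, ‖s‖ ≤ R → σ ≤ s.re →
    ∀ n : ℕ, ‖remainderTerm k J s (n + 1)‖ ≤ C * ((n : ℝ) + 1) ^ (1 - 2 * σ - J) := by
  obtain ⟨C, -, hC⟩ := exists_norm_binomRemainder_le J R k
  refine ⟨(2 + k) * C * k ^ J, fun s hs hσ n => ?_⟩
  set b : ℝ := (n : ℝ) + 1
  have hb : 1 ≤ b := le_add_of_nonneg_left n.cast_nonneg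
  have hb0 : 0 < b := by linarith
  have hweight : ‖((2 * b + k : ℝ) : ℂ)‖ ≤ (2 + k) * b := by
    rw [norm_real, Real.norm_of_nonneg (by positivity)]
    nlinarith [(k.cast_nonneg : (0 : ℝ) ≤ k)]
  have hpow : ‖(b : ℂ) ^ (-2 * s)‖ ≤ b ^ (-2 * σ) := by
    rw [norm_cpow_eq_rpow_re_of_pos hb0]
    exact Real.rpow_le_rpow_of_exponent_le hb (by simp; linarith)
  have hrem : ‖binomRemainder J s (k / b : ℝ)‖ ≤ C * k ^ J * b ^ (-(J : ℝ)) := by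
    refine (hC s hs _ ⟨by positivity, div_le_self k.cast_nonneg hb⟩).trans (le_of_eq ?_)
    rw [div_pow, Real.rpow_neg hb0.le, Real.rpow_natCast]
    ring
  calc ‖remainderTerm k J s b‖
      ≤ (2 + k) * b * b ^ (-2 * σ) * (C * k ^ J * b ^ (-(J : ℝ))) := by
        rw [remainderTerm, norm_mul, norm_mul]
        gcongr
    _ = (2 + k) * C * k ^ J * b ^ (1 - 2 * σ - J) := by
        rw [sub_eq_add_neg _ (J : ℝ), sub_eq_add_neg, Real.rpow_add hb0, Real.rpow_add hb0,
          Real.rpow_one, neg_mul]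
        ring

theorem summable_nat_add_one_rpow {c : ℝ} (hc : c < -1) :
    Summable fun n : ℕ => ((n : ℝ) + 1) ^ c := by
  simpa using (summable_nat_add_iff 1).2 (Real.summable_nat_rpow.2 hc)

theorem hasSum_nat_add_one_cpow_neg {w : ℂ} (hw : 1 < w.re) :
    HasSum (fun n : ℕ => (((n : ℝ) + 1 : ℝ) : ℂ) ^ (-w)) (riemannZeta w) := by
  have hs : Summable fun n : ℕ => 1 / ((n : ℂ) + 1) ^ w := by
    simpa using (summable_nat_add_iff 1).2 (summable_one_div_nat_cpow.2 hw)
  rw [zeta_eq_tsum_one_div_nat_add_one_cpow hw]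
  convert hs.hasSum using 1
  ext n
  simp [cpow_neg]

theorem summable_remainderTerm (k : ℕ) {J : ℕ} {s : ℂ} (h : 2 - J < 2 * s.re) :
    Summable fun n : ℕ => remainderTerm k J s (n + 1) := by
  obtain ⟨C, hC⟩ := exists_norm_remainderTerm_le k J ‖s‖ s.re
  exact .of_norm_bounded ((summable_nat_add_one_rpow (by linarith)).mul_left C)
    (hC s le_rfl le_rfl)

theorem differentiableAt_tsum_remainderTerm (k : ℕ) {J : ℕ} {s₀ : ℂ} (h : 2 - J < 2 * s₀.re) :
    DifferentiableAt ℂ (fun s => ∑' n : ℕ, remainderTerm k J s (n + 1)) s₀ := by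
  obtain ⟨σ, hσ, hσs⟩ := exists_between (show (2 - J : ℝ) / 2 < s₀.re by linarith)
  obtain ⟨C, hC⟩ := exists_norm_remainderTerm_le k J (‖s₀‖ + 1) σ
  set U := Metric.ball (0 : ℂ) (‖s₀‖ + 1) ∩ {s | σ < s.re}
  have hU : IsOpen U := Metric.isOpen_ball.inter (isOpen_lt continuous_const continuous_re)
  have hs₀ : s₀ ∈ U := ⟨by simp, hσs⟩
  refine (differentiableOn_tsum_of_summable_norm
    ((summable_nat_add_one_rpow (by linarith)).mul_left C)
    (fun n => (differentiable_remainderTerm k J (by positivity)).differentiableOn) hU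
    fun n s hs => hC s (mem_ball_zero_iff.1 hs.1).le hs.2.le n).differentiableAt (hU.mem_nhds hs₀)

theorem tsum_remainderTerm_sub_succ (k : ℕ) {J : ℕ} {s : ℂ} (h : 2 - J < 2 * s.re) :
    ∑' n : ℕ, remainderTerm k J s (n + 1) - ∑' n : ℕ, remainderTerm k (J + 1) s (n + 1) =
      Ring.choose (-s) J * (k : ℂ) ^ J *
        (2 * riemannZeta (2 * s + J - 1) + k * riemannZeta (2 * s + J)) := by
  have h1 : 1 < (2 * s + J - 1).re := by simp; linarith
  have h2 : 1 < (2 * s + J).re := by simp; linarith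
  rw [← (summable_remainderTerm k h).tsum_sub (summable_remainderTerm k (by push_cast; linarith))]
  refine (tsum_congr fun n => remainderTerm_sub_succ k J s (by positivity)).trans ?_
  exact ((((hasSum_nat_add_one_cpow_neg h1).mul_left 2).add
    ((hasSum_nat_add_one_cpow_neg h2).mul_left (k : ℂ))).mul_left _).tsum_eq

def riemannZetaMulSubOne : ℂ → ℂ := Function.update (fun s => (s - 1) * riemannZeta s) 1 1

theorem riemannZetaMulSubOne_of_ne_one {s : ℂ} (hs : s ≠ 1) :
    riemannZetaMulSubOne s = (s - 1) * riemannZeta s :=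
  Function.update_of_ne hs _ _

theorem differentiable_riemannZetaMulSubOne : Differentiable ℂ riemannZetaMulSubOne := by
  rw [← differentiableOn_univ,
    ← differentiableOn_compl_singleton_and_continuousAt_iff (c := 1) Filter.univ_mem]
  refine ⟨fun s hs => ?_, continuousAt_update_same.2 riemannZeta_residue_one⟩
  have hs1 : s ≠ 1 := hs.2
  refine (((differentiableAt_id.sub_const 1).mul (differentiableAt_riemannZeta hs1))
    |>.congr_of_eventuallyEq ?_).differentiableWithinAt
  filter_upwards [isOpen_ne.mem_nhds hs1] with w hw using riemannZetaMulSubOne_of_ne_one hw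

/-- The `j`-th binomial term contributes `ζ(2s+j)` and the `(j+1)`-st one `2ζ(2s+j)`; as
`(j+1) binom(-s,j+1) = (-s-j) binom(-s,j)`, together they are a multiple of the entire function
`(2s+j-1) ζ(2s+j)`. The first `m` such pairs are grouped here. -/
def weightedZetaRegAux (k m : ℕ) (s : ℂ) : ℂ :=
  -∑ j ∈ range m, (k : ℂ) ^ (j + 1) / (j + 1) * Ring.choose (-s) j *
      riemannZetaMulSubOne (2 * s + j)
    + Ring.choose (-s) m * (k : ℂ) ^ (m + 1) * riemannZeta (2 * s + m)
    + ∑' n : ℕ, remainderTerm k (m + 1) s (n + 1)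

theorem weightedZetaRegAux_succ (k m : ℕ) {s : ℂ} (h : 1 - m < 2 * s.re) :
    weightedZetaRegAux k (m + 1) s = weightedZetaRegAux k m s := by
  have hsub := tsum_remainderTerm_sub_succ k (J := m + 1) (s := s) (by push_cast; linarith)
  have hre : 1 < (2 * s + m).re := by simp; linarith
  have hchoose := succ_nsmul_choose_succ_eq_choose_mul_sub (-s) m
  rw [nsmul_eq_mul] at hchoose
  rw [weightedZetaRegAux, weightedZetaRegAux, sum_range_succ,
    riemannZetaMulSubOne_of_ne_one (ne_of_apply_ne re hre.ne')]
  push_cast at hsub hchoose ⊢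
  rw [show 2 * s + (m + 1) - 1 = 2 * s + m by ring] at hsub
  generalize riemannZeta (2 * s + m) = Z₀ at hsub ⊢
  generalize riemannZeta (2 * s + (m + 1)) = Z₁ at hsub ⊢
  have hm : (m : ℂ) + 1 ≠ 0 := Nat.cast_add_one_ne_zero m
  field_simp
  linear_combination (-(m + 1 : ℂ)) * hsub -
    2 * (k : ℂ) ^ (m + 1) * Z₀ * hchoose

theorem weightedZetaRegAux_eq_of_le (k : ℕ) {m m' : ℕ} (hm : m ≤ m') {s : ℂ}
    (h : 1 - m < 2 * s.re) : weightedZetaRegAux k m' s = weightedZetaRegAux k m s := by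
  induction m', hm using Nat.le_induction with
  | base => rfl
  | succ m' hm ih =>
    rw [weightedZetaRegAux_succ k m' (by linarith [(Nat.cast_le.2 hm : (m : ℝ) ≤ m')]), ih]

theorem differentiableAt_weightedZetaRegAux (k : ℕ) {m : ℕ} {s : ℂ} (h : 1 - m < 2 * s.re) :
    DifferentiableAt ℂ (weightedZetaRegAux k m) s := by
  have hre : 1 < (2 * s + m).re := by simp; linarith
  have hchoose (j : ℕ) : Differentiable ℂ fun s : ℂ => Ring.choose (-s) j :=
    (differentiable_choose j).comp differentiable_neg
  refine ((DifferentiableAt.fun_sum fun j _ => ?_).neg.add ?_).add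
    (differentiableAt_tsum_remainderTerm k (by push_cast; linarith))
  · exact ((hchoose j s).const_mul _).mul
      ((differentiable_riemannZetaMulSubOne _).comp s (by fun_prop))
  · exact ((hchoose m s).mul_const _).mul
      ((differentiableAt_riemannZeta (ne_of_apply_ne re hre.ne')).comp s (by fun_prop))

def weightedZetaReg (k : ℕ) (s : ℂ) : ℂ := weightedZetaRegAux k (⌊1 - 2 * s.re⌋₊ + 1) s

theorem weightedZetaReg_eq_aux (k : ℕ) {m : ℕ} {s : ℂ} (h : 1 - m < 2 * s.re) :
    weightedZetaReg k s = weightedZetaRegAux k m s := by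
  have hN : 1 - ((⌊1 - 2 * s.re⌋₊ + 1 : ℕ) : ℝ) < 2 * s.re := by
    push_cast; linarith [Nat.lt_floor_add_one (1 - 2 * s.re)]
  rcases le_total m (⌊1 - 2 * s.re⌋₊ + 1) with hle | hle
  · exact weightedZetaRegAux_eq_of_le k hle h
  · exact (weightedZetaRegAux_eq_of_le k hle hN).symm

theorem differentiable_weightedZetaReg (k : ℕ) : Differentiable ℂ (weightedZetaReg k) := by
  intro s
  obtain ⟨m, hm⟩ := exists_nat_gt (1 - 2 * s.re)
  have hopen : IsOpen {w : ℂ | 1 - m < 2 * w.re} := isOpen_lt continuous_const (by fun_prop)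
  refine (differentiableAt_weightedZetaRegAux k (by linarith)).congr_of_eventuallyEq ?_
  filter_upwards [hopen.mem_nhds (show (1 : ℝ) - m < 2 * s.re by linarith)] with w hw
    using weightedZetaReg_eq_aux k hw

def weightedZeta (k : ℕ) (s : ℂ) : ℂ := 2 * riemannZeta (2 * s - 1) + weightedZetaReg k s

theorem hasSum_weightedZeta (k : ℕ) {s : ℂ} (hs : 1 < s.re) :
    HasSum (fun n : ℕ => remainderTerm k 0 s (n + 1)) (weightedZeta k s) := by
  have hsub := tsum_remainderTerm_sub_succ k (J := 0) (s := s) (by simp; linarith)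
  convert (summable_remainderTerm k (J := 0) (s := s) (by simp; linarith)).hasSum using 1
  rw [weightedZeta, weightedZetaReg_eq_aux k (m := 0) (by simp; linarith), weightedZetaRegAux]
  simp only [range_zero, sum_empty, neg_zero, zero_add, Ring.choose_zero_right, Nat.cast_zero,
    add_zero, pow_one, one_mul, pow_zero, zero_add] at hsub ⊢
  linear_combination -hsub

theorem differentiableAt_weightedZeta (k : ℕ) {s : ℂ} (hs : s ≠ 1) :
    DifferentiableAt ℂ (weightedZeta k) s :=
  (((differentiableAt_riemannZeta fun h => hs (by linear_combination h / 2)).comp s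
    (by fun_prop)).const_mul 2).add (differentiable_weightedZetaReg k s)

theorem tendsto_nhdsNE_of_injective {X Y : Type*} [TopologicalSpace X] [TopologicalSpace Y]
    {f : X → Y} {x : X} (hf : ContinuousAt f x) (hinj : Function.Injective f) :
    Tendsto f (𝓝[≠] x) (𝓝[≠] (f x)) :=
  tendsto_nhdsWithin_of_tendsto_nhds_of_eventually_within f
    (hf.tendsto.mono_left nhdsWithin_le_nhds) (eventually_nhdsWithin_of_forall fun _ => hinj.ne)

theorem tendsto_sub_mul_nhdsNE_zero {f : ℂ → ℂ} {c : ℂ} (hf : ContinuousAt f c) :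
    Tendsto (fun s => (s - c) * f s) (𝓝[≠] c) (𝓝 0) := by
  have h : Tendsto (fun s => (s - c) * f s) (𝓝 c) (𝓝 ((c - c) * f c)) :=
    ((continuous_sub_right c).continuousAt.mul hf).tendsto
  rw [sub_self, zero_mul] at h
  exact h.mono_left nhdsWithin_le_nhds

theorem tendsto_sub_one_mul_weightedZeta (k : ℕ) :
    Tendsto (fun s => (s - 1) * weightedZeta k s) (𝓝[≠] 1) (𝓝 1) := by
  have hmap : Tendsto (fun s : ℂ => 2 * s - 1) (𝓝[≠] 1) (𝓝[≠] 1) := by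
    have h := tendsto_nhdsNE_of_injective (f := fun s : ℂ => 2 * s - 1) (x := 1)
      (by fun_prop) fun a b hab => by simpa using hab
    norm_num at h
    exact h
  have hpole : Tendsto (fun s : ℂ => (s - 1) * (2 * riemannZeta (2 * s - 1))) (𝓝[≠] 1) (𝓝 1) := by
    convert riemannZeta_residue_one.comp hmap using 2 with s
    simp only [Function.comp_apply]
    ring
  simpa [weightedZeta, mul_add] using hpole.add
    (tendsto_sub_mul_nhdsNE_zero (differentiable_weightedZetaReg k 1).continuousAt)

theorem tendsto_sub_mul_sum_shift {F : ℂ → ℂ} (hF : ∀ w ≠ 1, ContinuousAt F w)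
    (hres : Tendsto (fun w => (w - 1) * F w) (𝓝[≠] 1) (𝓝 1)) (c : ℕ → ℂ) {K n : ℕ}
    (hn : 1 ≤ n) (hnK : n ≤ K) :
    Tendsto (fun s => (s - n) * ∑ l ∈ range K, c l * F (s - l)) (𝓝[≠] (n : ℂ))
      (𝓝 (c (n - 1))) := by
  have hshift : (n : ℂ) - (n - 1 : ℕ) = 1 := by push_cast [Nat.cast_sub hn]; ring
  have hsum : ∑ l ∈ range K, (if l = n - 1 then c l else 0) = c (n - 1) := by
    rw [sum_ite_eq', if_pos (mem_range.2 (by omega))]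
  rw [← hsum]
  simp_rw [mul_sum]
  refine tendsto_finsetSum _ fun l _ => ?_
  split_ifs with hl
  · subst hl
    have hmap := tendsto_nhdsNE_of_injective (f := fun s : ℂ => s - (n - 1 : ℕ)) (x := n)
      (by fun_prop) (sub_left_injective)
    simp only [hshift] at hmap
    have h := (hres.comp hmap).const_mul (c (n - 1))
    rw [mul_one] at h
    refine h.congr fun s => ?_
    simp only [Function.comp_apply]
    linear_combination (c (n - 1) * F (s - (n - 1 : ℕ))) * hshift
  · have hne : (n : ℂ) - l ≠ 1 := fun h => hl <| by
      have h' : l + 1 = n := by exact_mod_cast (by linear_combination -h : (l : ℂ) + 1 = n)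
      omega
    refine (tendsto_sub_mul_nhdsNE_zero (f := fun s => c l * F (s - l)) (continuousAt_const.mul
      (ContinuousAt.comp (f := fun s : ℂ => s - l) (hF _ hne) (by fun_prop)))).congr fun s => ?_
    ring

theorem differentiableAt_sum_mul_weightedZeta_sub (k K : ℕ) (c : ℕ → ℂ) {s : ℂ}
    (hs : ∀ l < K, s ≠ l + 1) :
    DifferentiableAt ℂ (fun s => ∑ l ∈ range K, c l * weightedZeta k (s - l)) s :=
  DifferentiableAt.fun_sum fun l hl => by
    have hl1 : s - l ≠ 1 := fun h => hs l (mem_range.1 hl) (by linear_combination h)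
    exact ((differentiableAt_weightedZeta k hl1).comp s
      (differentiableAt_id.sub_const _)).const_mul _

theorem hasSum_sum_mul_weightedZeta_sub (k K : ℕ) (c : ℕ → ℂ) {s : ℂ} (hs : K < s.re) :
    HasSum (fun n : ℕ => ∑ l ∈ range K, c l * remainderTerm k 0 (s - l) (n + 1))
      (∑ l ∈ range K, c l * weightedZeta k (s - l)) :=
  hasSum_sum fun l hl => (hasSum_weightedZeta k <| by
    have hlK : (l : ℝ) + 1 ≤ K := by exact_mod_cast mem_range.1 hl
    simp only [sub_re, natCast_re]
    linarith).mul_left (c l)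

theorem summand_eq_sum_remainderTerm_zero {k : ℕ} {a : ℕ → ℝ}
    (ha : (∏ i ∈ Finset.Icc 1 (k - 1), (X + C (i : ℝ)) ^ 2) =
      ∑ l ∈ Finset.range k, C (a l) * (X ^ 2 + C ((k : ℕ) : ℝ) * X) ^ l)
    {x : ℝ} (hx : 0 < x) (s : ℂ) :
    (((k : ℝ) * (2 * x + k) / (Nat.factorial (k - 1) : ℝ) ^ 2 *
        ∏ i ∈ Finset.Icc 1 (k - 1), (x + i) ^ 2 : ℝ) : ℂ) / ((x * (x + k) : ℝ) : ℂ) ^ s =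
      (k : ℂ) / (Nat.factorial (k - 1) : ℂ) ^ 2 *
        ∑ l ∈ range k, (a l : ℂ) * remainderTerm k 0 (s - l) x := by
  have hU : ((x * (x + k) : ℝ) : ℂ) ≠ 0 := ofReal_ne_zero.2 (by positivity)
  have heval : ∏ i ∈ Finset.Icc 1 (k - 1), (x + i) ^ 2 =
      ∑ l ∈ range k, a l * (x * (x + k)) ^ l := by
    have h := congrArg (eval x) ha
    simp only [eval_prod, eval_finsetSum, eval_pow, eval_add, eval_mul, eval_X, eval_C] at h
    rw [h]
    exact sum_congr rfl fun l _ => by ring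
  have hpow (l : ℕ) : ((x * (x + k) : ℝ) : ℂ) ^ (-(s - l)) =
      ((x * (x + k) : ℝ) : ℂ) ^ l * ((x * (x + k) : ℝ) : ℂ) ^ (-s) := by
    rw [show -(s - l) = l + -s by ring, cpow_add _ _ hU, cpow_natCast]
  simp_rw [remainderTerm_zero k _ hx, hpow]
  rw [heval, div_eq_mul_inv, ← cpow_neg]
  push_cast
  rw [mul_sum, sum_mul, mul_sum]
  exact sum_congr rfl fun l _ => by ring

end

end CPkZeta

open CPkZeta Complex Finset in
theorem zeta_CPk_poles_general (k : ℕ) (a : ℕ → ℝ)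
    (ha : (∏ i ∈ Finset.Icc 1 (k - 1), (X + C (i : ℝ)) ^ 2) =
      ∑ l ∈ Finset.range k, C (a l) * (X ^ 2 + C ((k : ℕ) : ℝ) * X) ^ l) :
    ∃ Z : ℂ → ℂ,
      DifferentiableOn ℂ Z {s : ℂ | ∀ n : ℕ, 1 ≤ n → n ≤ k → s ≠ (n : ℂ)} ∧
      (∀ s : ℂ, (k : ℝ) < s.re →
        Z s = (4 : ℂ) ^ (-s) * ∑' n : ℕ,
          (((k : ℝ) * (2 * ((n : ℝ) + 1) + k) / (Nat.factorial (k - 1) : ℝ) ^ 2 *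
              ∏ i ∈ Finset.Icc 1 (k - 1), ((n : ℝ) + 1 + i) ^ 2 : ℝ) : ℂ) /
            ((((n : ℝ) + 1) * ((n : ℝ) + 1 + k) : ℝ) : ℂ) ^ s) ∧
      ∀ n : ℕ, 1 ≤ n → n ≤ k →
        Tendsto (fun s : ℂ => (s - (n : ℂ)) * Z s)
          (nhdsWithin (n : ℂ) {(n : ℂ)}ᶜ)
          (nhds ((((1 / 4 ^ n) * k * a (n - 1) / (Nat.factorial (k - 1) : ℝ) ^ 2 : ℝ) : ℂ))) := by
  set c : ℂ := (k : ℂ) / (Nat.factorial (k - 1) : ℂ) ^ 2 with hc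
  have hpow4 : Differentiable ℂ fun s : ℂ => (4 : ℂ) ^ (-s) :=
    differentiable_neg.const_cpow (.inl (by norm_num))
  refine ⟨fun s => 4 ^ (-s) * (c * ∑ l ∈ range k, (a l : ℂ) * weightedZeta k (s - l)),
    fun s hs => ?_, fun s hs => ?_, fun n hn hnk => ?_⟩
  · refine ((hpow4 s).mul ((differentiableAt_sum_mul_weightedZeta_sub k k _
      fun l hl h => hs (l + 1) l.succ_pos hl (by exact_mod_cast h)).const_mul c))
      |>.differentiableWithinAt
  · dsimp only
    rw [← ((hasSum_sum_mul_weightedZeta_sub k k _ hs).mul_left c).tsum_eq]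
    exact congrArg _ (tsum_congr fun n =>
      (summand_eq_sum_remainderTerm_zero ha (by positivity) s).symm)
  · have h4 : Tendsto (fun s : ℂ => (4 : ℂ) ^ (-s)) (𝓝[≠] (n : ℂ)) (𝓝 (4 ^ (-(n : ℂ)))) :=
      (hpow4 n).continuousAt.tendsto.mono_left nhdsWithin_le_nhds
    have hres := tendsto_sub_mul_sum_shift
      (fun w hw => (differentiableAt_weightedZeta k hw).continuousAt)
      (tendsto_sub_one_mul_weightedZeta k) (fun l => (a l : ℂ)) hn hnk
    convert h4.mul (hres.const_mul c) using 1
    · funext s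
      ring
    · rw [cpow_neg, cpow_natCast, hc]
      push_cast
      congr 1
      ring

/-- Proposition 3: `ζ(s,ℂP^k)` extends analytically to `ℂ ∖ {1,…,k}` with
simple poles at `s = n`, `1 ≤ n ≤ k`, of residue `4^{-n} k a_{k,n-1}/((k-1)!)²`. -/
theorem zeta_CPk_poles (k : ℕ) (hk : 2 ≤ k) (a : ℕ → ℝ)
    (ha : (∏ i ∈ Finset.Icc 1 (k - 1), (X + C (i : ℝ)) ^ 2) =
      ∑ l ∈ Finset.range k, C (a l) * (X ^ 2 + C ((k : ℕ) : ℝ) * X) ^ l) :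
    ∃ Z : ℂ → ℂ,
      DifferentiableOn ℂ Z {s : ℂ | ∀ n : ℕ, 1 ≤ n → n ≤ k → s ≠ (n : ℂ)} ∧
      (∀ s : ℂ, (k : ℝ) < s.re →
        Z s = (4 : ℂ) ^ (-s) * ∑' n : ℕ,
          (((k : ℝ) * (2 * ((n : ℝ) + 1) + k) / (Nat.factorial (k - 1) : ℝ) ^ 2 *
              ∏ i ∈ Finset.Icc 1 (k - 1), ((n : ℝ) + 1 + i) ^ 2 : ℝ) : ℂ) /
            ((((n : ℝ) + 1) * ((n : ℝ) + 1 + k) : ℝ) : ℂ) ^ s) ∧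
      ∀ n : ℕ, 1 ≤ n → n ≤ k →
        Tendsto (fun s : ℂ => (s - (n : ℂ)) * Z s)
          (nhdsWithin (n : ℂ) {(n : ℂ)}ᶜ)
          (nhds ((((1 / 4 ^ n) * k * a (n - 1) / (Nat.factorial (k - 1) : ℝ) ^ 2 : ℝ) : ℂ))) :=
  zeta_CPk_poles_general k a ha
end
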